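/- arXiv:2203.09062 — 3 statements merged into one kernel-verified Lean document; each statement's English description precedes it below -/
import Mathlib

section
/- For all n, m ∈ ℕ₀ with n ≥ m and all x ∈ ℂ: (1/√(m!)) e^{|x|²} ∂^m/∂x^m [ e^{-|x|²} xⁿ/√(n!) ] = √(m!/n!) · L_m^{(n-m)}(|x|²) · x^{n-m}, where ∂/∂x denotes the Wirtinger derivative treating x̄ as constant (i.e., differentiating e^{-x x̄} xⁿ with respect to x) and L_m^{(α)} is the generalized Laguerre polynomial. -/
open Complex Finset

/-- The generalized Laguerre polynomial
`L_m^{(α)}(u) = Σ_{k=0}^{m} (-1)^k binom(m+α, m-k) u^k/k!`, where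
`binom(m+α, m-k) = (∏_{j=k+1}^{m} (α+j)) / (m-k)!`. -/
noncomputable def genLaguerre (m : ℕ) (α : ℂ) (u : ℂ) : ℂ :=
  ∑ k ∈ Finset.range (m + 1),
    (-1 : ℂ) ^ k * ((∏ j ∈ Finset.Icc (k + 1) m, (α + (j : ℂ))) /
      (Nat.factorial (m - k))) * u ^ k / (Nat.factorial k)

private lemma prod_Icc_descFactorial (p : ℕ) : ∀ m i : ℕ, i ≤ m →
    ∏ j ∈ Finset.Icc (i + 1) m, (p + j) = (p + m).descFactorial (m - i) := by
  intro m
  induction m with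
  | zero => intro i hi; interval_cases i; simp
  | succ m ih =>
    intro i hi
    rcases Nat.eq_or_lt_of_le hi with h | h
    · subst h; simp
    · have hi' : i ≤ m := Nat.lt_succ_iff.mp h
      rw [Finset.prod_Icc_succ_top (by omega), ih i hi']
      have h1 : m + 1 - i = (m - i) + 1 := by omega
      have h2 : p + (m + 1) = (p + m) + 1 := by omega
      rw [h1, h2, Nat.succ_descFactorial_succ]
      ring

private lemma prod_Icc_cast (n m i : ℕ) (hmn : m ≤ n) (hi : i ≤ m) :
    ∏ j ∈ Finset.Icc (i + 1) m, ((n : ℂ) - (m : ℂ) + (j : ℂ)) =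
      (n.descFactorial (m - i) : ℂ) := by
  have h : ∀ j ∈ Finset.Icc (i + 1) m, ((n : ℂ) - (m : ℂ) + (j : ℂ)) = (((n - m) + j : ℕ) : ℂ) := by
    intro j _
    push_cast [Nat.cast_sub hmn]
    ring
  rw [Finset.prod_congr rfl h, ← Nat.cast_prod, prod_Icc_descFactorial (n - m) m i hi,
    Nat.sub_add_cancel hmn]

private lemma step_sum (c z : ℂ) (n m : ℕ) :
    (-c) * (∑ k ∈ Finset.range (m + 1),
        (m.choose k : ℂ) * (-c) ^ (m - k) * (n.descFactorial k : ℂ) * z ^ (n - k))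
      + ∑ k ∈ Finset.range (m + 1),
        (m.choose k : ℂ) * (-c) ^ (m - k) * (n.descFactorial k : ℂ) *
          (((n - k : ℕ) : ℂ) * z ^ (n - k - 1))
      = ∑ k ∈ Finset.range (m + 1 + 1),
        ((m + 1).choose k : ℂ) * (-c) ^ (m + 1 - k) * (n.descFactorial k : ℂ) * z ^ (n - k) := by
  have h1 : (-c) * (∑ k ∈ Finset.range (m + 1),
      (m.choose k : ℂ) * (-c) ^ (m - k) * (n.descFactorial k : ℂ) * z ^ (n - k))
      = ∑ k ∈ Finset.range (m + 1),
        (m.choose k : ℂ) * (-c) ^ (m + 1 - k) * (n.descFactorial k : ℂ) * z ^ (n - k) := by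
    rw [Finset.mul_sum]
    refine Finset.sum_congr rfl fun k hk => ?_
    have hk' : k ≤ m := Nat.lt_succ_iff.mp (Finset.mem_range.mp hk)
    rw [show m + 1 - k = (m - k) + 1 from by omega, pow_succ]
    ring
  have h2 : ∑ k ∈ Finset.range (m + 1),
      (m.choose k : ℂ) * (-c) ^ (m - k) * (n.descFactorial k : ℂ) *
        (((n - k : ℕ) : ℂ) * z ^ (n - k - 1))
      = ∑ k ∈ Finset.range (m + 1),
        (m.choose k : ℂ) * (-c) ^ (m - k) * (n.descFactorial (k + 1) : ℂ) * z ^ (n - (k + 1)) := by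
    refine Finset.sum_congr rfl fun k _ => ?_
    have hdf : (n.descFactorial (k + 1) : ℂ) = ((n - k : ℕ) : ℂ) * (n.descFactorial k : ℂ) := by
      push_cast [Nat.descFactorial_succ]
      ring
    rw [hdf, show n - k - 1 = n - (k + 1) from by omega]
    ring
  rw [h1, h2,
    Finset.sum_range_succ' (fun k => (m.choose k : ℂ) * (-c) ^ (m + 1 - k) *
      (n.descFactorial k : ℂ) * z ^ (n - k)) m,
    Finset.sum_range_succ' (fun k => ((m + 1).choose k : ℂ) * (-c) ^ (m + 1 - k) *
      (n.descFactorial k : ℂ) * z ^ (n - k)) (m + 1)]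
  have h3 : ∑ k ∈ Finset.range (m + 1),
      ((m + 1).choose (k + 1) : ℂ) * (-c) ^ (m + 1 - (k + 1)) *
        (n.descFactorial (k + 1) : ℂ) * z ^ (n - (k + 1))
      = (∑ k ∈ Finset.range m,
          (m.choose (k + 1) : ℂ) * (-c) ^ (m + 1 - (k + 1)) *
            (n.descFactorial (k + 1) : ℂ) * z ^ (n - (k + 1)))
        + ∑ k ∈ Finset.range (m + 1),
          (m.choose k : ℂ) * (-c) ^ (m - k) * (n.descFactorial (k + 1) : ℂ) * z ^ (n - (k + 1)) := by
    have e1 : ∀ k, ((m + 1).choose (k + 1) : ℂ) * (-c) ^ (m + 1 - (k + 1)) *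
        (n.descFactorial (k + 1) : ℂ) * z ^ (n - (k + 1))
        = (m.choose (k + 1) : ℂ) * (-c) ^ (m + 1 - (k + 1)) *
            (n.descFactorial (k + 1) : ℂ) * z ^ (n - (k + 1))
          + (m.choose k : ℂ) * (-c) ^ (m - k) * (n.descFactorial (k + 1) : ℂ) * z ^ (n - (k + 1)) := by
      intro k
      rw [Nat.choose_succ_succ, show m + 1 - (k + 1) = m - k from by omega]
      push_cast
      ring
    rw [Finset.sum_congr rfl fun k _ => e1 k, Finset.sum_add_distrib]
    congr 1
    rw [Finset.sum_range_succ]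
    simp [Nat.choose_succ_self]
  rw [h3]
  simp only [Nat.succ_sub_succ, Nat.choose_zero_right]
  push_cast
  ring

private lemma key (c : ℂ) (n : ℕ) (d : ℂ) : ∀ m : ℕ,
    iteratedDeriv m (fun z : ℂ => Complex.exp (-(z * c)) * z ^ n / d) =
    fun z : ℂ => Complex.exp (-(z * c)) *
      (∑ k ∈ Finset.range (m + 1),
        (m.choose k : ℂ) * (-c) ^ (m - k) * (n.descFactorial k : ℂ) * z ^ (n - k)) / d := by
  intro m
  induction m with
  | zero => simp
  | succ m ih =>
    rw [iteratedDeriv_succ, ih]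
    funext z
    have hE : HasDerivAt (fun z : ℂ => Complex.exp (-(z * c)))
        (Complex.exp (-(z * c)) * (-c)) z := by
      simpa using (((hasDerivAt_id z).mul_const c).neg).cexp
    have hS : HasDerivAt (fun z : ℂ => ∑ k ∈ Finset.range (m + 1),
        (m.choose k : ℂ) * (-c) ^ (m - k) * (n.descFactorial k : ℂ) * z ^ (n - k))
        (∑ k ∈ Finset.range (m + 1),
          (m.choose k : ℂ) * (-c) ^ (m - k) * (n.descFactorial k : ℂ) *
            (((n - k : ℕ) : ℂ) * z ^ (n - k - 1))) z := by
      apply HasDerivAt.fun_sum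
      intro k _
      exact (hasDerivAt_pow (n - k) z).const_mul _
    have hD := (hE.fun_mul hS).div_const d
    rw [hD.deriv]
    have := step_sum c z n m
    rw [show Complex.exp (-(z * c)) * (-c) *
          (∑ k ∈ Finset.range (m + 1),
            (m.choose k : ℂ) * (-c) ^ (m - k) * (n.descFactorial k : ℂ) * z ^ (n - k))
        + Complex.exp (-(z * c)) *
          (∑ k ∈ Finset.range (m + 1),
            (m.choose k : ℂ) * (-c) ^ (m - k) * (n.descFactorial k : ℂ) *
              (((n - k : ℕ) : ℂ) * z ^ (n - k - 1)))
      = Complex.exp (-(z * c)) *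
          ((-c) * (∑ k ∈ Finset.range (m + 1),
            (m.choose k : ℂ) * (-c) ^ (m - k) * (n.descFactorial k : ℂ) * z ^ (n - k))
          + ∑ k ∈ Finset.range (m + 1),
            (m.choose k : ℂ) * (-c) ^ (m - k) * (n.descFactorial k : ℂ) *
              (((n - k : ℕ) : ℂ) * z ^ (n - k - 1))) from by ring, this]

lemma final_sum (n m : ℕ) (hmn : m ≤ n) (x : ℂ) :
    (1 / (Real.sqrt (Nat.factorial m) : ℂ)) * ((1 / (Real.sqrt (Nat.factorial n) : ℂ)) *
      ∑ k ∈ Finset.range (m + 1), (m.choose k : ℂ) * (-(starRingEnd ℂ) x) ^ (m - k) *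
        (n.descFactorial k : ℂ) * x ^ (n - k))
    = (Real.sqrt ((Nat.factorial m : ℝ) / (Nat.factorial n : ℝ)) : ℂ) *
        genLaguerre m ((n : ℂ) - (m : ℂ)) ((‖x‖ ^ 2 : ℝ) : ℂ) * x ^ (n - m) := by
  have hu : (starRingEnd ℂ) x * x = ((‖x‖ ^ 2 : ℝ) : ℂ) := by
    rw [mul_comm, Complex.mul_conj]
    exact (congrArg Complex.ofReal (Complex.sq_norm x)).symm
  have hA : ((Real.sqrt (Nat.factorial m) : ℝ) : ℂ) * ((Real.sqrt (Nat.factorial m) : ℝ) : ℂ)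
      = ((Nat.factorial m : ℕ) : ℂ) := by
    rw [← Complex.ofReal_mul, Real.mul_self_sqrt (by positivity)]
    norm_cast
  have hAne : ((Real.sqrt (Nat.factorial m) : ℝ) : ℂ) ≠ 0 := by
    simp [Real.sqrt_eq_zero', Nat.factorial_pos]
    positivity
  have hBne : ((Real.sqrt (Nat.factorial n) : ℝ) : ℂ) ≠ 0 := by
    simp [Real.sqrt_eq_zero', Nat.factorial_pos]
    positivity
  have hs : ((Real.sqrt ((Nat.factorial m : ℝ) / (Nat.factorial n : ℝ)) : ℝ) : ℂ)
      = ((Real.sqrt (Nat.factorial m) : ℝ) : ℂ) / ((Real.sqrt (Nat.factorial n) : ℝ) : ℂ) := by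
    rw [Real.sqrt_div (by positivity), Complex.ofReal_div]
  set u : ℂ := ((‖x‖ ^ 2 : ℝ) : ℂ) with hudef
  set A : ℂ := ((Real.sqrt (Nat.factorial m) : ℝ) : ℂ) with hAdef
  set B : ℂ := ((Real.sqrt (Nat.factorial n) : ℝ) : ℂ) with hBdef
  unfold genLaguerre
  rw [Finset.mul_sum, Finset.mul_sum, Finset.mul_sum, Finset.sum_mul, ← Finset.sum_range_reflect]
  refine Finset.sum_congr rfl fun i hi => ?_
  have hi' : i ≤ m := Nat.lt_succ_iff.mp (Finset.mem_range.mp hi)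
  simp only [Nat.add_sub_cancel]
  rw [show m - (m - i) = i from by omega, Nat.choose_symm hi',
    show n - (m - i) = n - m + i from by omega, pow_add,
    prod_Icc_cast n m i hmn hi', hs]
  have hmulpow : (-(starRingEnd ℂ) x) ^ i * x ^ i = (-1 : ℂ) ^ i * u ^ i := by
    rw [← mul_pow, ← mul_pow, neg_mul, hu, neg_eq_neg_one_mul]
  have hch : (m.choose i : ℂ) * (Nat.factorial i : ℂ) * (Nat.factorial (m - i) : ℂ)
      = (Nat.factorial m : ℂ) := by
    exact_mod_cast congrArg (Nat.cast : ℕ → ℂ) (Nat.choose_mul_factorial_mul_factorial hi')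
  have hch' : (m.choose i : ℂ) * (Nat.factorial i : ℂ) * (Nat.factorial (m - i) : ℂ) = A * A := by
    rw [hch, ← hA]
  have hf1 : ((Nat.factorial (m - i) : ℕ) : ℂ) ≠ 0 := Nat.cast_ne_zero.mpr (Nat.factorial_pos _).ne'
  have hf2 : ((Nat.factorial i : ℕ) : ℂ) ≠ 0 := Nat.cast_ne_zero.mpr (Nat.factorial_pos _).ne'
  rw [show (1 : ℂ) / A * (1 / B * ((m.choose i : ℂ) * (-(starRingEnd ℂ) x) ^ i *
        (n.descFactorial (m - i) : ℂ) * (x ^ (n - m) * x ^ i)))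
      = ((m.choose i : ℂ) * ((-(starRingEnd ℂ) x) ^ i * x ^ i)) *
        ((n.descFactorial (m - i) : ℂ) * x ^ (n - m) / (A * B)) from by ring, hmulpow]
  field_simp
  linear_combination (u ^ i * (n.descFactorial (m - i) : ℂ) * x ^ (n - m)) * hch'

theorem wirtinger_deriv_of_gaussian_monomial (n m : ℕ) (hmn : m ≤ n) (x : ℂ) :
    (1 / (Real.sqrt (Nat.factorial m) : ℂ)) * Complex.exp ((‖x‖ ^ 2 : ℝ) : ℂ) *
      iteratedDeriv m
        (fun z : ℂ => Complex.exp (-(z * (starRingEnd ℂ) x)) * z ^ n /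
          (Real.sqrt (Nat.factorial n) : ℂ)) x =
      (Real.sqrt ((Nat.factorial m : ℝ) / (Nat.factorial n : ℝ)) : ℂ) *
        genLaguerre m ((n : ℂ) - (m : ℂ)) ((‖x‖ ^ 2 : ℝ) : ℂ) * x ^ (n - m) := by
  rw [key ((starRingEnd ℂ) x) n ((Real.sqrt (Nat.factorial n) : ℝ) : ℂ) m]
  have habs : ((‖x‖ ^ 2 : ℝ) : ℂ) = x * (starRingEnd ℂ) x := by
    rw [Complex.mul_conj]
    exact congrArg Complex.ofReal (Complex.sq_norm x)
  have hexp : Complex.exp ((‖x‖ ^ 2 : ℝ) : ℂ) *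
      Complex.exp (-(x * (starRingEnd ℂ) x)) = 1 := by
    rw [habs, ← Complex.exp_add]
    simp
  rw [show (1 / ((Real.sqrt (Nat.factorial m) : ℝ) : ℂ)) *
        Complex.exp ((‖x‖ ^ 2 : ℝ) : ℂ) *
        (Complex.exp (-(x * (starRingEnd ℂ) x)) *
          (∑ k ∈ Finset.range (m + 1), (m.choose k : ℂ) * (-(starRingEnd ℂ) x) ^ (m - k) *
            (n.descFactorial k : ℂ) * x ^ (n - k)) / ((Real.sqrt (Nat.factorial n) : ℝ) : ℂ))
      = (Complex.exp ((‖x‖ ^ 2 : ℝ) : ℂ) * Complex.exp (-(x * (starRingEnd ℂ) x))) *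
        ((1 / ((Real.sqrt (Nat.factorial m) : ℝ) : ℂ)) *
          ((1 / ((Real.sqrt (Nat.factorial n) : ℝ) : ℂ)) *
            ∑ k ∈ Finset.range (m + 1), (m.choose k : ℂ) * (-(starRingEnd ℂ) x) ^ (m - k) *
              (n.descFactorial k : ℂ) * x ^ (n - k))) from by ring, hexp, one_mul]
  exact final_sum n m hmn x
end

section
/- For every m ∈ ℕ₀ and all x, x' ∈ ℂ: Σ_{n=0}^{∞} (1/n!) L_m^{(n-m)}(|x|²) L_m^{(n-m)}(|x'|²) (x·conj(x'))^{n-m} = (1/m!) e^{x·conj(x')} L_m(|x−x'|²), where L_m = L_m^{(0)} and the sum converges absolutely. -/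
open Complex Finset

lemma genLaguerre_zero (α x : ℂ) : genLaguerre 0 α x = 1 := by
  simp [genLaguerre]

lemma prod_Icc_shift (a b : ℕ) (α : ℂ) :
    ∏ j ∈ Finset.Icc a b, (α + (j : ℂ))
      = ∏ i ∈ Finset.range (b + 1 - a), (α + (a : ℂ) + (i : ℂ)) := by
  rw [← Finset.Ico_add_one_right_eq_Icc, Finset.prod_Ico_eq_prod_range]
  exact Finset.prod_congr rfl (fun i _ => by push_cast; ring)

lemma fact_algebra (P β : ℂ) (N : ℕ) :
    P * (β + 1 + (N:ℂ)) / (Nat.factorial (N+1) : ℂ)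
      = β * P / (Nat.factorial (N+1) : ℂ) + P / (Nat.factorial N : ℂ) := by
  rw [Nat.factorial_succ]
  have h : ((Nat.factorial N : ℕ) : ℂ) ≠ 0 := Nat.cast_ne_zero.2 (Nat.factorial_ne_zero N)
  have h2 : ((N:ℂ) + 1) ≠ 0 := by
    have := Nat.cast_add_one_ne_zero (R := ℂ) N
    exact this
  push_cast
  field_simp
  ring

lemma genLaguerre_R1 (m : ℕ) (α x : ℂ) :
    genLaguerre (m+1) (α+1) x = genLaguerre (m+1) α x + genLaguerre m (α+1) x := by
  unfold genLaguerre
  rw [Finset.sum_range_succ (n := m+1), Finset.sum_range_succ (n := m+1)]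
  have htop : ∀ β : ℂ, (-1:ℂ)^(m+1) * ((∏ j ∈ Finset.Icc (m+1+1) (m+1), (β + (j:ℂ))) /
      (Nat.factorial (m+1-(m+1)))) * x^(m+1) / (Nat.factorial (m+1))
      = (-1:ℂ)^(m+1) * x^(m+1) / (Nat.factorial (m+1)) := by
    intro β
    rw [Finset.Icc_eq_empty (by omega), Finset.prod_empty]
    simp
  rw [htop, htop]
  have key : ∀ k ∈ Finset.range (m+1),
      (-1:ℂ)^k * ((∏ j ∈ Finset.Icc (k+1) (m+1), (α+1 + (j:ℂ))) / (Nat.factorial (m+1-k))) * x^k / (Nat.factorial k)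
      = (-1:ℂ)^k * ((∏ j ∈ Finset.Icc (k+1) (m+1), (α + (j:ℂ))) / (Nat.factorial (m+1-k))) * x^k / (Nat.factorial k)
        + (-1:ℂ)^k * ((∏ j ∈ Finset.Icc (k+1) m, (α+1 + (j:ℂ))) / (Nat.factorial (m-k))) * x^k / (Nat.factorial k) := by
    intro k hk
    rw [Finset.mem_range] at hk
    have hk' : k ≤ m := by omega
    have h1 : m + 1 + 1 - (k+1) = (m - k) + 1 := by omega
    have h2 : m + 1 - (k+1) = m - k := by omega
    have h3 : m + 1 - k = (m - k) + 1 := by omega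
    rw [prod_Icc_shift (k+1) (m+1), prod_Icc_shift (k+1) (m+1), prod_Icc_shift (k+1) m,
      h1, h2, h3]
    have e1 : (∏ i ∈ Finset.range ((m-k)+1), (α + 1 + ((k+1:ℕ):ℂ) + (i:ℂ)))
        = (∏ i ∈ Finset.range (m-k), (α + ((k:ℂ)+2) + (i:ℂ))) * ((α + (k:ℂ) + 1) + 1 + ((m-k:ℕ):ℂ)) := by
      rw [Finset.prod_range_succ]
      have ha : (∏ i ∈ Finset.range (m-k), (α + 1 + ((k+1:ℕ):ℂ) + (i:ℂ)))
          = ∏ i ∈ Finset.range (m-k), (α + ((k:ℂ)+2) + (i:ℂ)) :=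
        Finset.prod_congr rfl (fun i _ => by push_cast; ring)
      rw [ha]
      congr 1
      push_cast
      ring
    have e2 : (∏ i ∈ Finset.range ((m-k)+1), (α + ((k+1:ℕ):ℂ) + (i:ℂ)))
        = (α + (k:ℂ) + 1) * (∏ i ∈ Finset.range (m-k), (α + ((k:ℂ)+2) + (i:ℂ))) := by
      rw [Finset.prod_range_succ']
      have ha : (∏ i ∈ Finset.range (m-k), (α + ((k+1:ℕ):ℂ) + ((i+1:ℕ):ℂ)))
          = ∏ i ∈ Finset.range (m-k), (α + ((k:ℂ)+2) + (i:ℂ)) :=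
        Finset.prod_congr rfl (fun i _ => by push_cast; ring)
      rw [ha]
      push_cast
      ring
    have e3 : (∏ i ∈ Finset.range (m-k), (α + 1 + ((k+1:ℕ):ℂ) + (i:ℂ)))
        = ∏ i ∈ Finset.range (m-k), (α + ((k:ℂ)+2) + (i:ℂ)) :=
      Finset.prod_congr rfl (fun i _ => by push_cast; ring)
    rw [e1, e2, e3]
    have hfa := fact_algebra (∏ i ∈ Finset.range (m-k), (α + ((k:ℂ)+2) + (i:ℂ)))
      (α + (k:ℂ) + 1) (m-k)
    linear_combination ((-1:ℂ)^k * x^k / (Nat.factorial k : ℂ)) * hfa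
  have hsum := Finset.sum_congr rfl key
  rw [hsum, Finset.sum_add_distrib]
  ring

lemma genLaguerre_R2 (m : ℕ) (α x : ℂ) :
    ((m:ℂ)+1) * genLaguerre (m+1) α x
      = ((m:ℂ)+α+1) * genLaguerre m α x - x * genLaguerre m (α+1) x := by
  unfold genLaguerre
  set D : ℕ → ℂ := fun j => (-1:ℂ)^j * ((∏ i ∈ Finset.Icc j m, (α+1 + (i:ℂ))) /
      (Nat.factorial (m+1-j))) * x^j * (j:ℂ) / (Nat.factorial j) with hD
  have hxh : x * ∑ k ∈ Finset.range (m+1),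
      (-1:ℂ)^k * ((∏ j ∈ Finset.Icc (k+1) m, (α+1 + (j:ℂ))) / (Nat.factorial (m-k))) * x^k / (Nat.factorial k)
      = - ∑ k ∈ Finset.range (m+1), D (k+1) := by
    rw [Finset.mul_sum, ← Finset.sum_neg_distrib]
    refine Finset.sum_congr rfl fun k _ => ?_
    simp only [hD]
    have h1 : m + 1 - (k+1) = m - k := by omega
    rw [h1]
    have h2 : ((Nat.factorial (k+1) : ℕ) : ℂ) = ((k:ℂ)+1) * (Nat.factorial k : ℂ) := by
      rw [Nat.factorial_succ]; push_cast; ring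
    rw [h2]
    have hk1 : ((k:ℂ)+1) ≠ 0 := Nat.cast_add_one_ne_zero k
    have hkf : ((Nat.factorial k : ℕ) : ℂ) ≠ 0 := Nat.cast_ne_zero.2 (Nat.factorial_ne_zero k)
    have hmf : ((Nat.factorial (m-k) : ℕ) : ℂ) ≠ 0 := Nat.cast_ne_zero.2 (Nat.factorial_ne_zero _)
    field_simp
    push_cast
    ring
  rw [hxh]
  have hD0 : D 0 = 0 := by simp [hD]
  have hsplit : ∑ k ∈ Finset.range (m+2), D k = ∑ k ∈ Finset.range (m+1), D (k+1) := by
    rw [Finset.sum_range_succ']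
    rw [hD0, add_zero]
  rw [← hsplit]
  rw [Finset.sum_range_succ (f := D) (n := m+1)]
  rw [Finset.mul_sum, Finset.mul_sum, Finset.sum_range_succ]
  have htop : ((m:ℂ)+1) * ((-1:ℂ)^(m+1) * ((∏ j ∈ Finset.Icc (m+1+1) (m+1), (α + (j:ℂ))) /
      (Nat.factorial (m+1-(m+1)))) * x^(m+1) / (Nat.factorial (m+1))) = D (m+1) := by
    simp only [hD]
    rw [Finset.Icc_eq_empty (by omega), Finset.Icc_eq_empty (by omega)]
    have : m + 1 - (m+1) = 0 := by omega
    rw [this]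
    simp
    ring
  rw [htop]
  have key : ∀ k ∈ Finset.range (m+1),
      ((m:ℂ)+1) * ((-1:ℂ)^k * ((∏ j ∈ Finset.Icc (k+1) (m+1), (α + (j:ℂ))) / (Nat.factorial (m+1-k))) * x^k / (Nat.factorial k))
      = ((m:ℂ)+α+1) * ((-1:ℂ)^k * ((∏ j ∈ Finset.Icc (k+1) m, (α + (j:ℂ))) / (Nat.factorial (m-k))) * x^k / (Nat.factorial k))
        + D k := by
    intro k hk
    rw [Finset.mem_range] at hk
    have hk' : k ≤ m := by omega
    simp only [hD]
    have h1 : m + 1 + 1 - (k+1) = (m - k) + 1 := by omega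
    have h2 : m + 1 - k = (m - k) + 1 := by omega
    have h3 : m + 1 - (k+1) = m - k := by omega
    rw [prod_Icc_shift (k+1) (m+1), prod_Icc_shift (k+1) m, prod_Icc_shift k m, h1, h2, h3]
    set N := m - k with hN
    have hNc : (N:ℂ) = (m:ℂ) - (k:ℂ) := by
      rw [hN, Nat.cast_sub hk']
    -- normalize products
    have e1 : (∏ i ∈ Finset.range (N+1), (α + ((k+1:ℕ):ℂ) + (i:ℂ)))
        = (∏ i ∈ Finset.range N, (α + ((k+1:ℕ):ℂ) + (i:ℂ))) * (α + (k:ℂ) + 1 + (N:ℂ)) := by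
      rw [Finset.prod_range_succ]
      congr 1
      push_cast; ring
    have e2 : (∏ i ∈ Finset.range (N+1), (α + 1 + (k:ℂ) + (i:ℂ)))
        = (∏ i ∈ Finset.range N, (α + ((k+1:ℕ):ℂ) + (i:ℂ))) * (α + (k:ℂ) + 1 + (N:ℂ)) := by
      rw [Finset.prod_range_succ]
      congr 1
      · exact Finset.prod_congr rfl (fun i _ => by push_cast; ring)
      · push_cast; ring
    rw [e1, e2]
    set P : ℂ := ∏ i ∈ Finset.range N, (α + ((k+1:ℕ):ℂ) + (i:ℂ)) with hP
    have hf1 : ((Nat.factorial (N+1) : ℕ) : ℂ) = ((N:ℂ)+1) * (Nat.factorial N : ℂ) := by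
      rw [Nat.factorial_succ]; push_cast; ring
    rw [hf1]
    have hN1 : ((N:ℂ)+1) ≠ 0 := Nat.cast_add_one_ne_zero N
    have hNf : ((Nat.factorial N : ℕ) : ℂ) ≠ 0 := Nat.cast_ne_zero.2 (Nat.factorial_ne_zero N)
    have hkf : ((Nat.factorial k : ℕ) : ℂ) ≠ 0 := Nat.cast_ne_zero.2 (Nat.factorial_ne_zero k)
    field_simp
    rw [hNc]
    ring
  rw [Finset.sum_congr rfl key, Finset.sum_add_distrib]
  ring

lemma one_le_fact_cast (k : ℕ) : (1:ℝ) ≤ (Nat.factorial k : ℝ) := by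
  exact_mod_cast Nat.one_le_iff_ne_zero.2 (Nat.factorial_ne_zero k)

lemma genLaguerre_abs_le (m n : ℕ) (x : ℂ) :
    norm (genLaguerre m ((n:ℂ) - (m:ℂ)) x)
      ≤ ((m:ℝ)+1) * (max 1 (norm x))^m * ((n:ℝ)+(m:ℝ)+1)^m := by
  have hbase : (1:ℝ) ≤ (n:ℝ)+(m:ℝ)+1 := by
    have h1 : (0:ℝ) ≤ (n:ℝ) := Nat.cast_nonneg n
    have h2 : (0:ℝ) ≤ (m:ℝ) := Nat.cast_nonneg m
    linarith
  have hmax : (1:ℝ) ≤ max 1 (norm x) := le_max_left 1 _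
  unfold genLaguerre
  refine le_trans (norm_sum_le _ _) ?_
  have hterm : ∀ k ∈ Finset.range (m+1),
      norm ((-1:ℂ)^k * ((∏ j ∈ Finset.Icc (k+1) m, ((n:ℂ)-(m:ℂ) + (j:ℂ))) /
        (Nat.factorial (m-k))) * x^k / (Nat.factorial k))
      ≤ (max 1 (norm x))^m * ((n:ℝ)+(m:ℝ)+1)^m := by
    intro k hk
    rw [Finset.mem_range] at hk
    have hk' : k ≤ m := by omega
    rw [norm_div, norm_mul, norm_mul, norm_div, norm_pow, norm_pow]
    simp only [norm_neg, norm_one, one_pow, one_mul, Complex.norm_natCast]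
    have hprod : norm (∏ j ∈ Finset.Icc (k+1) m, ((n:ℂ)-(m:ℂ) + (j:ℂ)))
        ≤ ((n:ℝ)+(m:ℝ)+1)^m := by
      rw [norm_prod]
      refine le_trans (Finset.prod_le_prod (g := fun _ => ((n:ℝ)+(m:ℝ)+1)) (fun i _ => norm_nonneg _) ?_) ?_
      · intro j hj
        rw [Finset.mem_Icc] at hj
        show norm ((n:ℂ)-(m:ℂ) + (j:ℂ)) ≤ (n:ℝ)+(m:ℝ)+1
        have hcast : ((n:ℂ)-(m:ℂ)+(j:ℂ)) = (((n:ℤ)-(m:ℤ)+(j:ℤ) : ℤ) : ℂ) := by push_cast; ring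
        rw [hcast, Complex.norm_intCast]
        have habs : |(n:ℤ)-(m:ℤ)+(j:ℤ)| ≤ (n:ℤ)+(m:ℤ)+1 := by rw [abs_le]; omega
        calc |(((n:ℤ)-(m:ℤ)+(j:ℤ) : ℤ) : ℝ)| = ((|(n:ℤ)-(m:ℤ)+(j:ℤ)| : ℤ) : ℝ) := by
              rw [Int.cast_abs]
          _ ≤ (((n:ℤ)+(m:ℤ)+1 : ℤ) : ℝ) := by exact_mod_cast habs
          _ = (n:ℝ)+(m:ℝ)+1 := by push_cast; ring
      · rw [Finset.prod_const, Nat.card_Icc]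
        exact pow_le_pow_right₀ hbase (by omega)
    have hx : (norm x)^k ≤ (max 1 (norm x))^m :=
      le_trans (pow_le_pow_left₀ (norm_nonneg x) (le_max_right 1 _) k)
        (pow_le_pow_right₀ hmax hk')
    calc norm (∏ j ∈ Finset.Icc (k+1) m, ((n:ℂ)-(m:ℂ) + (j:ℂ))) /
          (Nat.factorial (m-k) : ℝ) * (norm x)^k / (Nat.factorial k : ℝ)
        ≤ norm (∏ j ∈ Finset.Icc (k+1) m, ((n:ℂ)-(m:ℂ) + (j:ℂ))) /
          (Nat.factorial (m-k) : ℝ) * (norm x)^k := by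
          apply div_le_self (by positivity) (one_le_fact_cast k)
      _ ≤ norm (∏ j ∈ Finset.Icc (k+1) m, ((n:ℂ)-(m:ℂ) + (j:ℂ))) * (norm x)^k := by
          apply mul_le_mul_of_nonneg_right _ (by positivity)
          apply div_le_self (norm_nonneg _) (one_le_fact_cast _)
      _ ≤ ((n:ℝ)+(m:ℝ)+1)^m * (max 1 (norm x))^m := by
          apply mul_le_mul hprod hx (by positivity) (by positivity)
      _ = (max 1 (norm x))^m * ((n:ℝ)+(m:ℝ)+1)^m := by ring
  refine le_trans (Finset.sum_le_sum hterm) ?_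
  rw [Finset.sum_const, Finset.card_range, nsmul_eq_mul]
  apply le_of_eq
  push_cast
  ring

noncomputable def lagTerm (u z a b : ℂ) (m₁ m₂ n : ℕ) : ℂ :=
  (1/(Nat.factorial n :ℂ)) * genLaguerre m₂ ((n:ℂ)-(m₂:ℂ)) a *
    genLaguerre m₁ ((n:ℂ)-(m₁:ℂ)) b * u^((n:ℤ)-(m₂:ℤ)) * z^((n:ℤ)-(m₁:ℤ))

lemma summable_poly_exp (M : ℕ) (r : ℝ) (hr : 0 ≤ r) :
    Summable (fun n : ℕ => ((n:ℝ)+M)^(2*M) * r^n / (Nat.factorial n : ℝ)) := by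
  have key : ∀ n : ℕ, ((n:ℝ)+M)^(2*M) * r^n / (Nat.factorial n : ℝ)
      ≤ (Nat.factorial (2*M) : ℝ) * Real.exp M * ((Real.exp 1 * r)^n / (Nat.factorial n : ℝ)) := by
    intro n
    have h1 : ((n:ℝ)+M)^(2*M) ≤ (Nat.factorial (2*M) : ℝ) * Real.exp ((n:ℝ)+M) := by
      have h := Real.pow_div_factorial_le_exp (x := (n:ℝ)+(M:ℝ)) (by positivity) (2*M)
      have hf : (0:ℝ) < (Nat.factorial (2*M) : ℝ) := by exact_mod_cast Nat.factorial_pos (2*M)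
      rw [div_le_iff₀ hf] at h
      linarith
    have h2 : Real.exp ((n:ℝ)+M) = Real.exp 1 ^ n * Real.exp M := by
      rw [Real.exp_add]
      congr 1
      rw [← Real.exp_one_rpow (n:ℝ), ← Real.rpow_natCast (Real.exp 1) n]
    calc ((n:ℝ)+M)^(2*M) * r^n / (Nat.factorial n : ℝ)
        ≤ ((Nat.factorial (2*M) : ℝ) * Real.exp ((n:ℝ)+M)) * r^n / (Nat.factorial n : ℝ) := by
          gcongr
      _ = (Nat.factorial (2*M) : ℝ) * Real.exp M * ((Real.exp 1 * r)^n / (Nat.factorial n : ℝ)) := by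
          rw [h2, mul_pow]; ring
  refine Summable.of_nonneg_of_le (fun n => by positivity) key ?_
  exact ((Real.summable_pow_div_factorial (Real.exp 1 * r)).mul_left _)

lemma summable_abs_lagTerm (u z a b : ℂ) (hu : u ≠ 0) (hz : z ≠ 0) (m₁ m₂ : ℕ) :
    Summable (fun n => norm (lagTerm u z a b m₁ m₂ n)) := by
  have hau : (0:ℝ) < norm u := norm_pos_iff.mpr hu
  have haz : (0:ℝ) < norm z := norm_pos_iff.mpr hz
  set M : ℕ := m₁ + m₂ + 1 with hM
  set c₂ : ℝ := ((m₂:ℝ)+1) * (max 1 (norm a))^m₂ with hc₂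
  set c₁ : ℝ := ((m₁:ℝ)+1) * (max 1 (norm b))^m₁ with hc₁
  set C : ℝ := c₂ * c₁ / ((norm u)^m₂ * (norm z)^m₁) with hC
  have hbound : ∀ n : ℕ, norm (lagTerm u z a b m₁ m₂ n)
      ≤ C * (((n:ℝ)+M)^(2*M) * (norm u * norm z)^n / (Nat.factorial n : ℝ)) := by
    intro n
    have hA := genLaguerre_abs_le m₂ n a
    have hB := genLaguerre_abs_le m₁ n b
    have hEq : norm (lagTerm u z a b m₁ m₂ n)
        = (norm (genLaguerre m₂ ((n:ℂ)-(m₂:ℂ)) a) * norm (genLaguerre m₁ ((n:ℂ)-(m₁:ℂ)) b))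
          * ((norm u)^n * (norm z)^n /
            ((norm u)^m₂ * (norm z)^m₁ * (Nat.factorial n : ℝ))) := by
      unfold lagTerm
      rw [norm_mul, norm_mul, norm_mul, norm_mul, norm_div, norm_one, Complex.norm_natCast,
        norm_zpow, norm_zpow, zpow_sub₀ (ne_of_gt hau), zpow_sub₀ (ne_of_gt haz),
        zpow_natCast, zpow_natCast, zpow_natCast, zpow_natCast]
      ring
    have hpow : ((n:ℝ)+(m₂:ℝ)+1)^m₂ * ((n:ℝ)+(m₁:ℝ)+1)^m₁ ≤ ((n:ℝ)+(M:ℝ))^(2*M) := by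
      have hMc : (M:ℝ) = (m₁:ℝ) + (m₂:ℝ) + 1 := by rw [hM]; push_cast; ring
      have h1 : ((n:ℝ)+(m₂:ℝ)+1)^m₂ ≤ ((n:ℝ)+(M:ℝ))^M := by
        refine le_trans (pow_le_pow_left₀ (by positivity) ?_ m₂) (pow_le_pow_right₀ ?_ ?_)
        · rw [hMc]; have := Nat.cast_nonneg (α := ℝ) m₁; linarith
        · rw [hMc]; have := Nat.cast_nonneg (α := ℝ) m₁; have := Nat.cast_nonneg (α := ℝ) m₂;
          have := Nat.cast_nonneg (α := ℝ) n; linarith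
        · omega
      have h2 : ((n:ℝ)+(m₁:ℝ)+1)^m₁ ≤ ((n:ℝ)+(M:ℝ))^M := by
        refine le_trans (pow_le_pow_left₀ (by positivity) ?_ m₁) (pow_le_pow_right₀ ?_ ?_)
        · rw [hMc]; have := Nat.cast_nonneg (α := ℝ) m₂; linarith
        · rw [hMc]; have := Nat.cast_nonneg (α := ℝ) m₁; have := Nat.cast_nonneg (α := ℝ) m₂;
          have := Nat.cast_nonneg (α := ℝ) n; linarith
        · omega
      calc ((n:ℝ)+(m₂:ℝ)+1)^m₂ * ((n:ℝ)+(m₁:ℝ)+1)^m₁ ≤ ((n:ℝ)+(M:ℝ))^M * ((n:ℝ)+(M:ℝ))^M := by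
            apply mul_le_mul h1 h2 (by positivity) (by positivity)
        _ = ((n:ℝ)+(M:ℝ))^(2*M) := by rw [← pow_add]; congr 1; omega
    have hAB : norm (genLaguerre m₂ ((n:ℂ)-(m₂:ℂ)) a) * norm (genLaguerre m₁ ((n:ℂ)-(m₁:ℂ)) b)
        ≤ (c₂ * c₁) * ((n:ℝ)+(M:ℝ))^(2*M) := by
      calc norm (genLaguerre m₂ ((n:ℂ)-(m₂:ℂ)) a) * norm (genLaguerre m₁ ((n:ℂ)-(m₁:ℂ)) b)
          ≤ (c₂ * ((n:ℝ)+(m₂:ℝ)+1)^m₂) * (c₁ * ((n:ℝ)+(m₁:ℝ)+1)^m₁) := by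
            apply mul_le_mul (by rw [hc₂]; exact hA) (by rw [hc₁]; exact hB)
              (norm_nonneg _) (by positivity)
        _ = (c₂ * c₁) * (((n:ℝ)+(m₂:ℝ)+1)^m₂ * ((n:ℝ)+(m₁:ℝ)+1)^m₁) := by ring
        _ ≤ (c₂ * c₁) * ((n:ℝ)+(M:ℝ))^(2*M) := by
            apply mul_le_mul_of_nonneg_left hpow (by positivity)
    have hC2 : C * (((n:ℝ)+M)^(2*M) * (norm u * norm z)^n / (Nat.factorial n : ℝ))
        = ((c₂ * c₁) * ((n:ℝ)+(M:ℝ))^(2*M)) * ((norm u)^n * (norm z)^n /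
            ((norm u)^m₂ * (norm z)^m₁ * (Nat.factorial n : ℝ))) := by
      rw [hC, mul_pow]
      ring
    rw [hEq, hC2]
    exact mul_le_mul_of_nonneg_right hAB (by positivity)
  refine Summable.of_nonneg_of_le (fun n => norm_nonneg _) hbound ?_
  exact (summable_poly_exp M (norm u * norm z) (by positivity)).mul_left C

lemma summable_lagTerm (u z a b : ℂ) (hu : u ≠ 0) (hz : z ≠ 0) (m₁ m₂ : ℕ) :
    Summable (fun n => lagTerm u z a b m₁ m₂ n) := by
  apply Summable.of_norm
  simpa using summable_abs_lagTerm u z a b hu hz m₁ m₂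

lemma exp_tsum (t : ℂ) : Complex.exp t = ∑' n : ℕ, t^n / (Nat.factorial n : ℂ) := by
  rw [Complex.exp_eq_exp_ℂ, NormedSpace.exp_eq_tsum_div]

lemma final_alg (u v w z X Y Z E F A B : ℂ) (hF : F ≠ 0) (hA : A ≠ 0) (d : ℕ)
    (hR : B * Z = A * X - (u-w)*(v-z) * Y) :
    (u-w) * (1/(A*F) * E * (z-v)^(d+1) * Y) + 1/F * E * (z-v)^d * X
      = B * (1/(A*F) * E * (z-v)^d * Z) := by
  rw [pow_succ]
  have hA' : A * A⁻¹ = 1 := mul_inv_cancel₀ hA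
  linear_combination (-(E*(z-v)^d/(A*F))) * hR - (E*(z-v)^d*X/F) * hA'

theorem lag_master (u v w z : ℂ) (hu : u ≠ 0) (hz : z ≠ 0) :
    ∀ m₁ d : ℕ, ∑' n, lagTerm u z (u*v) (w*z) m₁ (m₁+d) n
      = (1/(Nat.factorial (m₁+d) : ℂ)) * Complex.exp (u*z) * (z-v)^d *
        genLaguerre m₁ (d:ℂ) ((u-w)*(v-z)) := by
  intro m₁
  induction m₁ with
  | zero =>
    intro d
    induction d with
    | zero =>
      have h0 : ∀ n : ℕ, lagTerm u z (u*v) (w*z) 0 0 n = (u*z)^n / (Nat.factorial n : ℂ) := by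
        intro n
        unfold lagTerm
        rw [genLaguerre_zero, genLaguerre_zero]
        have he : (n:ℤ) - ((0:ℕ):ℤ) = (n:ℕ) := by push_cast; ring
        rw [he, zpow_natCast, zpow_natCast, mul_pow]
        ring
      rw [tsum_congr h0, ← exp_tsum]
      simp [genLaguerre_zero]
    | succ d ih =>
      set F : ℕ → ℂ := fun n => (n:ℂ) * ((1/(Nat.factorial n :ℂ)) *
        genLaguerre d ((n:ℂ)-1-(d:ℂ)) (u*v) * u^((n:ℤ)-1-(d:ℤ)) * z^((n:ℤ))) with hF
      have hFsucc : ∀ n : ℕ, F (n+1) = z * lagTerm u z (u*v) (w*z) 0 d n := by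
        intro n
        rw [hF]
        unfold lagTerm
        rw [genLaguerre_zero]
        simp only
        have e1 : ((n+1:ℕ):ℂ) - 1 - (d:ℂ) = (n:ℂ) - (d:ℂ) := by push_cast; ring
        have e2 : ((n+1:ℕ):ℤ) - 1 - (d:ℤ) = (n:ℤ) - (d:ℤ) := by push_cast; ring
        have e3 : ((n+1:ℕ):ℤ) = (n:ℤ) + 1 := by push_cast; ring
        have e4 : (n:ℤ) - ((0:ℕ):ℤ) = (n:ℤ) := by push_cast; ring
        rw [e1, e2, e3, e4, zpow_add₀ hz, zpow_one]
        have e5 : ((Nat.factorial (n+1) : ℕ):ℂ) = ((n:ℂ)+1) * (Nat.factorial n : ℂ) := by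
          rw [Nat.factorial_succ]; push_cast; ring
        rw [e5]
        have hn1 : ((n:ℂ)+1) ≠ 0 := Nat.cast_add_one_ne_zero n
        have hnf : ((Nat.factorial n : ℕ):ℂ) ≠ 0 := Nat.cast_ne_zero.2 (Nat.factorial_ne_zero n)
        push_cast
        field_simp
      have hFsummable : Summable F := by
        rw [← summable_nat_add_iff 1]
        apply Summable.congr ((summable_lagTerm u z (u*v) (w*z) hu hz 0 d).mul_left z)
        intro n
        exact (hFsucc n).symm
      have hkey : ∀ n : ℕ, ((d:ℂ)+1) * lagTerm u z (u*v) (w*z) 0 (0+(d+1)) n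
          = F n - v * lagTerm u z (u*v) (w*z) 0 (0+d) n := by
        intro n
        have hdd : (0:ℕ) + (d+1) = d+1 := by omega
        have hdd2 : (0:ℕ) + d = d := by omega
        rw [hdd, hdd2]
        unfold lagTerm
        rw [genLaguerre_zero, hF]
        simp only
        have hR2 := genLaguerre_R2 d ((n:ℂ)-((d:ℂ)+1)) (u*v)
        have e0 : ((d+1:ℕ):ℂ) = (d:ℂ)+1 := by push_cast; ring
        have e0' : (n:ℂ) - ((d+1:ℕ):ℂ) = (n:ℂ)-((d:ℂ)+1) := by push_cast; ring
        have e1 : (d:ℂ) + ((n:ℂ)-((d:ℂ)+1)) + 1 = (n:ℂ) := by ring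
        have e2 : (n:ℂ)-((d:ℂ)+1)+1 = (n:ℂ)-(d:ℂ) := by ring
        rw [e1, e2] at hR2
        rw [e0']
        have e3 : (n:ℂ) - ((d:ℂ)+1) = (n:ℂ) - 1 - (d:ℂ) := by ring
        rw [e3] at hR2
        rw [e3]
        -- zpow manipulations
        have e4 : (n:ℤ) - ((d+1:ℕ):ℤ) = (n:ℤ) - 1 - (d:ℤ) := by push_cast; ring
        have e5 : (n:ℤ) - ((0:ℕ):ℤ) = (n:ℤ) := by push_cast; ring
        have e6 : u^((n:ℤ) - (d:ℤ)) = u^((n:ℤ) - 1 - (d:ℤ)) * u := by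
          have h7 : (n:ℤ) - (d:ℤ) = ((n:ℤ) - 1 - (d:ℤ)) + 1 := by ring
          rw [h7, zpow_add_one₀ hu]
        rw [e4, e5, e6]
        calc ((d:ℂ)+1) * ((1/(Nat.factorial n :ℂ)) * genLaguerre (d+1) ((n:ℂ)-1-(d:ℂ)) (u*v) * 1 *
              u^((n:ℤ)-1-(d:ℤ)) * z^((n:ℤ)))
            = (((d:ℂ)+1) * genLaguerre (d+1) ((n:ℂ)-1-(d:ℂ)) (u*v)) * ((1/(Nat.factorial n :ℂ)) *
              u^((n:ℤ)-1-(d:ℤ)) * z^((n:ℤ))) := by ring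
          _ = ((n:ℂ) * genLaguerre d ((n:ℂ)-1-(d:ℂ)) (u*v) - (u*v) * genLaguerre d ((n:ℂ)-(d:ℂ)) (u*v)) *
              ((1/(Nat.factorial n :ℂ)) * u^((n:ℤ)-1-(d:ℤ)) * z^((n:ℤ))) := by rw [hR2]
          _ = (n:ℂ) * ((1/(Nat.factorial n :ℂ)) * genLaguerre d ((n:ℂ)-1-(d:ℂ)) (u*v) *
                u^((n:ℤ)-1-(d:ℤ)) * z^((n:ℤ)))
              - v * ((1/(Nat.factorial n :ℂ)) * genLaguerre d ((n:ℂ)-(d:ℂ)) (u*v) * 1 *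
                (u^((n:ℤ)-1-(d:ℤ)) * u) * z^((n:ℤ))) := by ring
      -- now the tsum computation
      have hsum1 : Summable (fun n => lagTerm u z (u*v) (w*z) 0 (0+(d+1)) n) :=
        summable_lagTerm u z (u*v) (w*z) hu hz 0 (0+(d+1))
      have hsumd : Summable (fun n => lagTerm u z (u*v) (w*z) 0 (0+d) n) :=
        summable_lagTerm u z (u*v) (w*z) hu hz 0 (0+d)
      have hstep : ((d:ℂ)+1) * ∑' n, lagTerm u z (u*v) (w*z) 0 (0+(d+1)) n
          = (z - v) * ∑' n, lagTerm u z (u*v) (w*z) 0 (0+d) n := by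
        rw [← tsum_mul_left]
        rw [tsum_congr hkey]
        rw [Summable.tsum_sub hFsummable (hsumd.mul_left v)]
        rw [tsum_mul_left]
        have hFeval : ∑' n, F n = z * ∑' n, lagTerm u z (u*v) (w*z) 0 (0+d) n := by
          rw [Summable.tsum_eq_zero_add hFsummable]
          have hF0 : F 0 = 0 := by rw [hF]; simp
          rw [hF0, zero_add, tsum_congr hFsucc, tsum_mul_left]
          have hdd2 : (0:ℕ) + d = d := by omega
          rw [hdd2]
        rw [hFeval]
        ring
      have hd1 : ((d:ℂ)+1) ≠ 0 := Nat.cast_add_one_ne_zero d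
      apply mul_left_cancel₀ hd1
      rw [hstep, ih]
      have hdd : (0:ℕ) + (d+1) = d+1 := by omega
      have hdd2 : (0:ℕ) + d = d := by omega
      rw [genLaguerre_zero, genLaguerre_zero]
      have hf : ((Nat.factorial (d+1) : ℕ):ℂ) = ((d:ℂ)+1) * (Nat.factorial d : ℂ) := by
        rw [Nat.factorial_succ]; push_cast; ring
      rw [hdd, hf]
      have hdf : ((Nat.factorial d : ℕ):ℂ) ≠ 0 := Nat.cast_ne_zero.2 (Nat.factorial_ne_zero d)
      field_simp
      rw [hdd2, mul_div_assoc, div_self hdf, mul_one]; ring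
  | succ m₁ ih =>
    intro d
    have hgoal : m₁ + 1 + d = (m₁ + d) + 1 := by omega
    rw [hgoal]
    set M : ℕ := m₁ + d with hM
    have ih1 : ∑' n, lagTerm u z (u*v) (w*z) m₁ (M+1) n
        = (1/(Nat.factorial (M+1) : ℂ)) * Complex.exp (u*z) * (z-v)^(d+1) *
          genLaguerre m₁ ((d:ℂ)+1) ((u-w)*(v-z)) := by
      have h1 : m₁ + (d+1) = M + 1 := by omega
      have h2 : ((d+1:ℕ):ℂ) = (d:ℂ)+1 := by push_cast; ring
      have := ih (d+1)
      rw [h1, h2] at this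
      exact this
    have ih0 : ∑' n, lagTerm u z (u*v) (w*z) m₁ M n
        = (1/(Nat.factorial M : ℂ)) * Complex.exp (u*z) * (z-v)^d *
          genLaguerre m₁ (d:ℂ) ((u-w)*(v-z)) := ih d
    set G : ℕ → ℂ := fun n => (n:ℂ) * ((1/(Nat.factorial n :ℂ)) *
      genLaguerre (M+1) ((n:ℂ)-((M+1:ℕ):ℂ)) (u*v) *
      genLaguerre m₁ ((n:ℂ)-1-(m₁:ℂ)) (w*z) *
      u^((n:ℤ)-((M+1:ℕ):ℤ)) * z^((n:ℤ)-1-(m₁:ℤ))) with hG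
    have hGsucc : ∀ n : ℕ, G (n+1) = u * lagTerm u z (u*v) (w*z) m₁ (M+1) n
        + lagTerm u z (u*v) (w*z) m₁ M n := by
      intro n
      rw [hG]
      unfold lagTerm
      simp only
      have e1 : ((n+1:ℕ):ℂ) - ((M+1:ℕ):ℂ) = ((n:ℂ) - ((M:ℕ):ℂ) - 1) + 1 := by push_cast; ring
      have e2 : ((n+1:ℕ):ℂ) - 1 - (m₁:ℂ) = (n:ℂ) - (m₁:ℂ) := by push_cast; ring
      have e3 : ((n+1:ℕ):ℤ) - ((M+1:ℕ):ℤ) = (n:ℤ) - (M:ℤ) := by push_cast; ring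
      have e4 : ((n+1:ℕ):ℤ) - 1 - (m₁:ℤ) = (n:ℤ) - (m₁:ℤ) := by push_cast; ring
      rw [e1, e2, e3, e4]
      have hR1 := genLaguerre_R1 M ((n:ℂ) - ((M:ℕ):ℂ) - 1) (u*v)
      rw [hR1]
      have e5 : (n:ℂ) - ((M:ℕ):ℂ) - 1 + 1 = (n:ℂ) - ((M:ℕ):ℂ) := by ring
      have e6 : (n:ℂ) - ((M:ℕ):ℂ) - 1 = (n:ℂ) - ((M+1:ℕ):ℂ) := by push_cast; ring
      rw [e5, e6]
      have e7 : u^((n:ℤ) - (M:ℤ)) = u * u^((n:ℤ) - ((M+1:ℕ):ℤ)) := by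
        have h7 : (n:ℤ) - (M:ℤ) = 1 + ((n:ℤ) - ((M+1:ℕ):ℤ)) := by push_cast; ring
        rw [h7, zpow_add₀ hu, zpow_one]
      rw [e7]
      have e8 : ((Nat.factorial (n+1) : ℕ):ℂ) = ((n:ℂ)+1) * (Nat.factorial n : ℂ) := by
        rw [Nat.factorial_succ]; push_cast; ring
      rw [e8]
      have hn1 : ((n:ℂ)+1) ≠ 0 := Nat.cast_add_one_ne_zero n
      have hnf : ((Nat.factorial n : ℕ):ℂ) ≠ 0 := Nat.cast_ne_zero.2 (Nat.factorial_ne_zero n)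
      have e9 : ((n+1:ℕ):ℂ) = (n:ℂ)+1 := by push_cast; ring
      rw [e9]
      have e10 : (n:ℤ) - (M:ℤ) = (n:ℤ) - ((M:ℕ):ℤ) := rfl
      field_simp
    have hGsummable : Summable G := by
      rw [← summable_nat_add_iff 1]
      apply Summable.congr (((summable_lagTerm u z (u*v) (w*z) hu hz m₁ (M+1)).mul_left u).add
        (summable_lagTerm u z (u*v) (w*z) hu hz m₁ M))
      intro n
      exact (hGsucc n).symm
    have hkey : ∀ n : ℕ, ((m₁:ℂ)+1) * lagTerm u z (u*v) (w*z) (m₁+1) (M+1) n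
        = G n - w * lagTerm u z (u*v) (w*z) m₁ (M+1) n := by
      intro n
      rw [hG]
      unfold lagTerm
      simp only
      have hR2 := genLaguerre_R2 m₁ ((n:ℂ)-((m₁:ℂ)+1)) (w*z)
      have e1 : (m₁:ℂ) + ((n:ℂ)-((m₁:ℂ)+1)) + 1 = (n:ℂ) := by ring
      have e2 : (n:ℂ)-((m₁:ℂ)+1)+1 = (n:ℂ)-(m₁:ℂ) := by ring
      have e3 : (n:ℂ)-((m₁:ℂ)+1) = (n:ℂ) - 1 - (m₁:ℂ) := by ring
      rw [e1, e2, e3] at hR2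
      have e4 : (n:ℂ) - ((m₁+1:ℕ):ℂ) = (n:ℂ) - 1 - (m₁:ℂ) := by push_cast; ring
      have e5 : (n:ℤ) - ((m₁+1:ℕ):ℤ) = (n:ℤ) - 1 - (m₁:ℤ) := by push_cast; ring
      rw [e4, e5]
      have e6 : z^((n:ℤ) - (m₁:ℤ)) = z^((n:ℤ) - 1 - (m₁:ℤ)) * z := by
        have h7 : (n:ℤ) - (m₁:ℤ) = ((n:ℤ) - 1 - (m₁:ℤ)) + 1 := by ring
        rw [h7, zpow_add_one₀ hz]
      rw [e6]
      calc ((m₁:ℂ)+1) * ((1/(Nat.factorial n :ℂ)) * genLaguerre (M+1) ((n:ℂ)-((M+1:ℕ):ℂ)) (u*v) *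
            genLaguerre (m₁+1) ((n:ℂ)-1-(m₁:ℂ)) (w*z) * u^((n:ℤ)-((M+1:ℕ):ℤ)) * z^((n:ℤ)-1-(m₁:ℤ)))
          = (((m₁:ℂ)+1) * genLaguerre (m₁+1) ((n:ℂ)-1-(m₁:ℂ)) (w*z)) *
            ((1/(Nat.factorial n :ℂ)) * genLaguerre (M+1) ((n:ℂ)-((M+1:ℕ):ℂ)) (u*v) *
              u^((n:ℤ)-((M+1:ℕ):ℤ)) * z^((n:ℤ)-1-(m₁:ℤ))) := by ring
        _ = ((n:ℂ) * genLaguerre m₁ ((n:ℂ)-1-(m₁:ℂ)) (w*z) - (w*z) * genLaguerre m₁ ((n:ℂ)-(m₁:ℂ)) (w*z)) *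
            ((1/(Nat.factorial n :ℂ)) * genLaguerre (M+1) ((n:ℂ)-((M+1:ℕ):ℂ)) (u*v) *
              u^((n:ℤ)-((M+1:ℕ):ℤ)) * z^((n:ℤ)-1-(m₁:ℤ))) := by rw [hR2]
        _ = (n:ℂ) * ((1/(Nat.factorial n :ℂ)) * genLaguerre (M+1) ((n:ℂ)-((M+1:ℕ):ℂ)) (u*v) *
              genLaguerre m₁ ((n:ℂ)-1-(m₁:ℂ)) (w*z) * u^((n:ℤ)-((M+1:ℕ):ℤ)) * z^((n:ℤ)-1-(m₁:ℤ)))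
            - w * ((1/(Nat.factorial n :ℂ)) * genLaguerre (M+1) ((n:ℂ)-((M+1:ℕ):ℂ)) (u*v) *
              genLaguerre m₁ ((n:ℂ)-(m₁:ℂ)) (w*z) * u^((n:ℤ)-((M+1:ℕ):ℤ)) *
              (z^((n:ℤ)-1-(m₁:ℤ)) * z)) := by ring
    have hsum1 : Summable (fun n => lagTerm u z (u*v) (w*z) m₁ (M+1) n) :=
      summable_lagTerm u z (u*v) (w*z) hu hz m₁ (M+1)
    have hstep : ((m₁:ℂ)+1) * ∑' n, lagTerm u z (u*v) (w*z) (m₁+1) (M+1) n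
        = (u - w) * ∑' n, lagTerm u z (u*v) (w*z) m₁ (M+1) n
          + ∑' n, lagTerm u z (u*v) (w*z) m₁ M n := by
      rw [← tsum_mul_left, tsum_congr hkey, Summable.tsum_sub hGsummable (hsum1.mul_left w),
        tsum_mul_left]
      have hGeval : ∑' n, G n = u * ∑' n, lagTerm u z (u*v) (w*z) m₁ (M+1) n
          + ∑' n, lagTerm u z (u*v) (w*z) m₁ M n := by
        rw [Summable.tsum_eq_zero_add hGsummable]
        have hG0 : G 0 = 0 := by rw [hG]; simp
        rw [hG0, zero_add, tsum_congr hGsucc,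
          Summable.tsum_add ((summable_lagTerm u z (u*v) (w*z) hu hz m₁ (M+1)).mul_left u)
            (summable_lagTerm u z (u*v) (w*z) hu hz m₁ M),
          tsum_mul_left]
      rw [hGeval]
      ring
    have hm11 : ((m₁:ℂ)+1) ≠ 0 := Nat.cast_add_one_ne_zero m₁
    apply mul_left_cancel₀ hm11
    rw [hstep, ih1, ih0]
    have hR2f := genLaguerre_R2 m₁ ((d:ℕ):ℂ) ((u-w)*(v-z))
    have hfact : ((Nat.factorial (M+1) : ℕ):ℂ) = ((m₁:ℂ)+(d:ℂ)+1) * (Nat.factorial M : ℂ) := by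
      rw [Nat.factorial_succ]
      have : ((M+1:ℕ):ℂ) = (m₁:ℂ)+(d:ℂ)+1 := by rw [hM]; push_cast; ring
      push_cast
      rw [hM]
      push_cast
      ring
    rw [hfact]
    have hMf : ((Nat.factorial M : ℕ):ℂ) ≠ 0 := Nat.cast_ne_zero.2 (Nat.factorial_ne_zero M)
    have hmd1 : ((m₁:ℂ)+(d:ℂ)+1) ≠ 0 := by
      have : ((m₁:ℂ)+(d:ℂ)+1) = (((m₁+d:ℕ):ℂ)+1) := by push_cast; ring
      rw [this]
      exact Nat.cast_add_one_ne_zero _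
    exact final_alg u v w z _ _ _ (Complex.exp (u*z)) ((Nat.factorial M : ℕ):ℂ)
      ((m₁:ℂ)+(d:ℂ)+1) ((m₁:ℂ)+1) hMf hmd1 d hR2f

lemma genLaguerre_zero_zero (m : ℕ) : genLaguerre m 0 0 = 1 := by
  unfold genLaguerre
  rw [Finset.sum_eq_single 0]
  · have h1 : ∏ j ∈ Finset.Icc 1 m, ((0:ℂ)+(j:ℂ)) = (Nat.factorial m : ℂ) := by
      rw [prod_Icc_shift]
      have : ∀ i ∈ Finset.range (m+1-1), ((0:ℂ)+(1:ℕ)+(i:ℂ)) = ((i+1:ℕ):ℂ) := by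
        intro i _; push_cast; ring
      rw [Finset.prod_congr rfl this, ← Nat.cast_prod]
      have h2 : m + 1 - 1 = m := by omega
      rw [h2, Finset.prod_range_add_one_eq_factorial]
    have h0 : (0:ℕ)+1 = 1 := rfl
    rw [h0, h1]
    have hf : ((Nat.factorial m : ℕ):ℂ) ≠ 0 := Nat.cast_ne_zero.2 (Nat.factorial_ne_zero m)
    have h3 : m - 0 = m := by omega
    rw [h3]
    simp [div_self hf]
  · intro k _ hk
    rw [zero_pow hk]
    ring
  · intro h
    exact absurd (Finset.mem_range.2 (by omega)) h

theorem laguerre_summation_identity (m : ℕ) (x x' : ℂ) :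
    Summable (fun n : ℕ => norm
      ((1 / (Nat.factorial n : ℂ)) *
        genLaguerre m ((n : ℂ) - (m : ℂ)) ((norm x ^ 2 : ℝ) : ℂ) *
        genLaguerre m ((n : ℂ) - (m : ℂ)) ((norm x' ^ 2 : ℝ) : ℂ) *
        (x * (starRingEnd ℂ) x') ^ ((n : ℤ) - (m : ℤ)))) ∧
    ∑' n : ℕ,
      (1 / (Nat.factorial n : ℂ)) *
        genLaguerre m ((n : ℂ) - (m : ℂ)) ((norm x ^ 2 : ℝ) : ℂ) *
        genLaguerre m ((n : ℂ) - (m : ℂ)) ((norm x' ^ 2 : ℝ) : ℂ) *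
        (x * (starRingEnd ℂ) x') ^ ((n : ℤ) - (m : ℤ)) =
      (1 / (Nat.factorial m : ℂ)) * Complex.exp (x * (starRingEnd ℂ) x') *
        genLaguerre m 0 ((norm (x - x') ^ 2 : ℝ) : ℂ) := by
  by_cases hx : x = 0
  · subst hx
    have hzero : ∀ n : ℕ, n ≠ m →
        (1 / (Nat.factorial n : ℂ)) *
          genLaguerre m ((n : ℂ) - (m : ℂ)) ((norm (0:ℂ) ^ 2 : ℝ) : ℂ) *
          genLaguerre m ((n : ℂ) - (m : ℂ)) ((norm x' ^ 2 : ℝ) : ℂ) *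
          ((0:ℂ) * (starRingEnd ℂ) x') ^ ((n : ℤ) - (m : ℤ)) = 0 := by
      intro n hn
      have he : ((n:ℤ) - (m:ℤ)) ≠ 0 := sub_ne_zero.2 (by exact_mod_cast hn)
      rw [zero_mul, zero_zpow _ he, mul_zero]
    constructor
    · apply summable_of_ne_finset_zero (s := {m})
      intro n hn
      rw [hzero n (by simpa using hn), norm_zero]
    · rw [tsum_eq_single m hzero]
      rw [sub_self, sub_self, zpow_zero, mul_one]
      have h3 : ((norm (0:ℂ) ^2 : ℝ):ℂ) = 0 := by simp
      rw [h3, genLaguerre_zero_zero, mul_one]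
      rw [zero_mul, Complex.exp_zero, mul_one, zero_sub]
      have h4 : norm (-x') = norm x' := norm_neg _
      rw [h4]
  · by_cases hx' : x' = 0
    · subst hx'
      have hc0 : (starRingEnd ℂ) (0:ℂ) = 0 := map_zero _
      have hzero : ∀ n : ℕ, n ≠ m →
          (1 / (Nat.factorial n : ℂ)) *
            genLaguerre m ((n : ℂ) - (m : ℂ)) ((norm x ^ 2 : ℝ) : ℂ) *
            genLaguerre m ((n : ℂ) - (m : ℂ)) ((norm (0:ℂ) ^ 2 : ℝ) : ℂ) *
            (x * (starRingEnd ℂ) (0:ℂ)) ^ ((n : ℤ) - (m : ℤ)) = 0 := by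
        intro n hn
        have he : ((n:ℤ) - (m:ℤ)) ≠ 0 := sub_ne_zero.2 (by exact_mod_cast hn)
        rw [hc0, mul_zero, zero_zpow _ he, mul_zero]
      constructor
      · apply summable_of_ne_finset_zero (s := {m})
        intro n hn
        rw [hzero n (by simpa using hn), norm_zero]
      · rw [tsum_eq_single m hzero]
        rw [sub_self, sub_self, zpow_zero, mul_one]
        have h3 : ((norm (0:ℂ) ^2 : ℝ):ℂ) = 0 := by simp
        rw [h3, genLaguerre_zero_zero, mul_one]
        rw [hc0, mul_zero, Complex.exp_zero, mul_one, sub_zero]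
    · -- main case
      have hz' : (starRingEnd ℂ) x' ≠ 0 := by simp [hx']
      have hxa : ((norm x ^ 2 : ℝ) : ℂ) = x * (starRingEnd ℂ) x := by
        rw [Complex.sq_norm]; exact (Complex.mul_conj x).symm
      have hxb : ((norm x' ^ 2 : ℝ) : ℂ) = x' * (starRingEnd ℂ) x' := by
        rw [Complex.sq_norm]; exact (Complex.mul_conj x').symm
      have hterm : ∀ n : ℕ,
          (1 / (Nat.factorial n : ℂ)) *
            genLaguerre m ((n : ℂ) - (m : ℂ)) ((norm x ^ 2 : ℝ) : ℂ) *
            genLaguerre m ((n : ℂ) - (m : ℂ)) ((norm x' ^ 2 : ℝ) : ℂ) *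
            (x * (starRingEnd ℂ) x') ^ ((n : ℤ) - (m : ℤ))
          = lagTerm x ((starRingEnd ℂ) x') (x * (starRingEnd ℂ) x) (x' * (starRingEnd ℂ) x') m m n := by
        intro n
        unfold lagTerm
        rw [mul_zpow, hxa, hxb]
        ring
      constructor
      · refine Summable.congr
          (summable_abs_lagTerm x ((starRingEnd ℂ) x') (x * (starRingEnd ℂ) x)
            (x' * (starRingEnd ℂ) x') hx hz' m m) ?_
        intro n
        exact congrArg norm (hterm n).symm
      · rw [tsum_congr hterm]
        have hm := lag_master x ((starRingEnd ℂ) x) x' ((starRingEnd ℂ) x') hx hz' m 0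
        simp only [Nat.add_zero, pow_zero, mul_one, Nat.cast_zero] at hm
        rw [hm]
        congr 1
        have h5 : ((norm (x - x') ^ 2 : ℝ) : ℂ)
            = (x - x') * ((starRingEnd ℂ) x - (starRingEnd ℂ) x') := by
          rw [Complex.sq_norm, ← map_sub]
          exact (Complex.mul_conj (x - x')).symm
        rw [h5]
end

section
/- For R > 0, n, m ∈ ℕ₀, define p_n^{(R,m)} = (m!/n!) ∫_0^{R²} u^{n−m} e^{−u} |L_m^{(n−m)}(u)|² du. Then for every fixed R and m, 0 ≤ p_n^{(R,m)} ≤ 1 for all n, and Σ_{n=0}^∞ p_n^{(R,m)} < ∞. -/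
open Finset intervalIntegral

/-- The generalized Laguerre polynomial
`L_m^{(α)}(u) = Σ_{k=0}^{m} (-1)^k binom(m+α, m-k) u^k/k!`, where
`binom(m+α, m-k) = (∏_{j=k+1}^{m} (α+j)) / (m-k)!`. -/
noncomputable def genLaguerreR (m : ℕ) (α : ℝ) (u : ℝ) : ℝ :=
  ∑ k ∈ Finset.range (m + 1),
    (-1 : ℝ) ^ k * ((∏ j ∈ Finset.Icc (k + 1) m, (α + (j : ℝ))) /
      (Nat.factorial (m - k))) * u ^ k / (Nat.factorial k)

/-- `p_n^{(R,m)} = (m!/n!) ∫_0^{R²} u^{n−m} e^{−u} |L_m^{(n−m)}(u)|² du`. -/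
noncomputable def eigP (R : ℝ) (m n : ℕ) : ℝ :=
  ((Nat.factorial m : ℝ) / (Nat.factorial n : ℝ)) *
    ∫ u in (0 : ℝ)..(R ^ 2),
      u ^ ((n : ℤ) - (m : ℤ)) * Real.exp (-u) * |genLaguerreR m ((n : ℝ) - (m : ℝ)) u| ^ 2

namespace LaguerreAux

open MeasureTheory Set

/-! ### The combinatorial core -/

/-- Auxiliary alternating binomial sum. -/
def laguerreV (m a l : ℕ) : ℤ :=
  ∑ k ∈ Finset.range (m + 1),
    (-1) ^ k * ((m + a).choose (m - k) : ℤ) * ((a + l + k).choose k : ℤ)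

/-- Recurrence in `a`. -/
lemma laguerreV_rec_a (M a l : ℕ) :
    laguerreV (M + 1) (a + 1) l = laguerreV (M + 1) a (l + 1) + laguerreV M (a + 1) l := by
  unfold laguerreV
  rw [Finset.sum_range_succ, Finset.sum_range_succ (n := M + 1)]
  have h1 : ∀ k ∈ Finset.range (M + 1),
      (-1 : ℤ) ^ k * ((M + 1 + (a + 1)).choose (M + 1 - k) : ℤ) * ((a + 1 + l + k).choose k : ℤ)
      = (-1) ^ k * ((M + 1 + a).choose (M + 1 - k) : ℤ) * ((a + (l + 1) + k).choose k : ℤ)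
        + (-1) ^ k * ((M + (a + 1)).choose (M - k) : ℤ) * ((a + 1 + l + k).choose k : ℤ) := by
    intro k hk
    rw [Finset.mem_range] at hk
    have hks : M + 1 - k = (M - k) + 1 := by omega
    have htop : M + 1 + (a + 1) = (M + 1 + a) + 1 := by ring
    rw [hks, htop, Nat.choose_succ_succ']
    have hMA : M + 1 + a = M + (a + 1) := by ring
    push_cast [hMA]
    have h2 : a + (l + 1) + k = a + 1 + l + k := by ring
    rw [h2]
    have h3 : (M + (a + 1)).choose (M - k + 1) = (M + 1 + a).choose (M + 1 - k) := by
      rw [hks]; congr 1; omega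
    rw [h3]
    push_cast
    ring
  rw [Finset.sum_congr rfl h1, Finset.sum_add_distrib]
  have e1 : (M + 1 + (a + 1)).choose (M + 1 - (M + 1)) = 1 := by simp
  have e2 : (M + 1 + a).choose (M + 1 - (M + 1)) = 1 := by simp
  rw [e1, e2]
  have e3 : a + 1 + l + (M + 1) = a + (l + 1) + (M + 1) := by ring
  rw [e3]
  push_cast
  ring

/-- Recurrence in `l`. -/
lemma laguerreV_rec_l (M a l : ℕ) :
    laguerreV (M + 1) a (l + 1) = laguerreV (M + 1) a l - laguerreV M (a + 1) l := by
  unfold laguerreV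
  rw [Finset.sum_range_succ' _ (M + 1), Finset.sum_range_succ' (n := M + 1)]
  have h1 : ∀ k ∈ Finset.range (M + 1),
      (-1 : ℤ) ^ (k + 1) * ((M + 1 + a).choose (M + 1 - (k + 1)) : ℤ)
        * ((a + (l + 1) + (k + 1)).choose (k + 1) : ℤ)
      = (-1) ^ (k + 1) * ((M + 1 + a).choose (M + 1 - (k + 1)) : ℤ)
          * ((a + l + (k + 1)).choose (k + 1) : ℤ)
        - (-1) ^ k * ((M + (a + 1)).choose (M - k) : ℤ) * ((a + 1 + l + k).choose k : ℤ) := by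
    intro k hk
    rw [Finset.mem_range] at hk
    have h2 : a + (l + 1) + (k + 1) = (a + l + (k + 1)) + 1 := by ring
    rw [h2, Nat.choose_succ_succ]
    have h3 : (M + 1 + a).choose (M + 1 - (k + 1)) = (M + (a + 1)).choose (M - k) := by
      congr 1 <;> omega
    rw [h3]
    have h4 : a + l + (k + 1) = a + 1 + l + k := by ring
    rw [h4]
    push_cast
    ring
  rw [Finset.sum_congr rfl h1, Finset.sum_sub_distrib]
  have h5 : a + (l + 1) + 0 = (a + l + 0) + 1 := by ring
  simp only [Nat.choose_zero_right, h5]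
  push_cast
  ring

lemma laguerreV_eq (m a l : ℕ) : laguerreV m a l = (-1) ^ m * (l.choose m : ℤ) := by
  induction m generalizing a l with
  | zero => simp [laguerreV]
  | succ M ih =>
    induction a generalizing l with
    | zero =>
      induction l with
      | zero =>
        unfold laguerreV
        have h1 : ∀ k ∈ Finset.range (M + 1 + 1),
            (-1 : ℤ) ^ k * ((M + 1 + 0).choose (M + 1 - k) : ℤ) * ((0 + 0 + k).choose k : ℤ)
            = (-1) ^ k * ((M + 1).choose k : ℤ) := by
          intro k hk
          rw [Finset.mem_range] at hk
          simp only [Nat.add_zero, Nat.zero_add, Nat.choose_self]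
          rw [Nat.choose_symm (by omega : k ≤ M + 1)]
          push_cast
          ring
        rw [Finset.sum_congr rfl h1]
        rw [Int.alternating_sum_range_choose_of_ne (by omega)]
        simp
      | succ l ihl =>
        rw [laguerreV_rec_l, ihl, ih]
        rw [Nat.choose_succ_succ l M]
        push_cast
        ring
    | succ a iha =>
      rw [laguerreV_rec_a, iha, ih]
      rw [Nat.choose_succ_succ l M]
      push_cast
      ring

/-! ### Factorial products and the binomial form of the Laguerre polynomial -/

lemma prod_Icc_factorial (a k : ℕ) : ∀ m, k ≤ m →
    ∏ j ∈ Finset.Icc (k + 1) m, ((a : ℝ) + (j : ℝ)) =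
      (Nat.factorial (a + m) : ℝ) / (Nat.factorial (a + k) : ℝ) := by
  refine Nat.le_induction ?_ ?_
  · simp [Finset.Icc_eq_empty_of_lt (Nat.lt_succ_self k),
      div_self (by positivity : (Nat.factorial (a + k) : ℝ) ≠ 0)]
  · intro m hm ihm
    rw [Finset.prod_Icc_succ_top (by omega), ihm]
    have h : a + (m + 1) = (a + m) + 1 := by ring
    rw [h, Nat.factorial_succ]
    push_cast
    field_simp
    ring

/-- `genLaguerreR` with nonnegative integer parameter, in binomial-coefficient form. -/
lemma genLaguerreR_nat (m a : ℕ) (u : ℝ) :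
    genLaguerreR m (a : ℝ) u =
      ∑ k ∈ Finset.range (m + 1),
        (-1 : ℝ) ^ k * ((m + a).choose (m - k) : ℝ) / (Nat.factorial k) * u ^ k := by
  unfold genLaguerreR
  refine Finset.sum_congr rfl fun k hk => ?_
  rw [Finset.mem_range] at hk
  rw [prod_Icc_factorial a k m (by omega)]
  rw [Nat.cast_choose ℝ (by omega : m - k ≤ m + a)]
  have h1 : m + a - (m - k) = a + k := by omega
  have h2 : m + a = a + m := by omega
  rw [h1, h2]
  ring

noncomputable def lagC (m a k : ℕ) : ℝ :=
  (-1 : ℝ) ^ k * ((m + a).choose (m - k) : ℝ) / (Nat.factorial k : ℝ)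

lemma sum_cc (m a : ℕ) :
    ∑ k ∈ Finset.range (m + 1), ∑ l ∈ Finset.range (m + 1),
        lagC m a k * lagC m a l * (Nat.factorial (a + k + l) : ℝ)
      = (Nat.factorial (m + a) : ℝ) / (Nat.factorial m : ℝ) := by
  have inner : ∀ k, ∑ l ∈ Finset.range (m + 1),
      lagC m a l * (Nat.factorial (a + k + l) : ℝ)
      = (Nat.factorial (a + k) : ℝ) * ((-1 : ℝ) ^ m * (k.choose m : ℝ)) := by
    intro k
    have step : ∀ l, lagC m a l * (Nat.factorial (a + k + l) : ℝ)
        = (Nat.factorial (a + k) : ℝ) *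
          ((-1 : ℝ) ^ l * ((m + a).choose (m - l) : ℝ) * (((a + k + l).choose l) : ℝ)) := by
      intro l
      have hfac : ((a + k + l).choose l) * (Nat.factorial l) * (Nat.factorial (a + k))
          = Nat.factorial (a + k + l) := by
        have h := Nat.choose_mul_factorial_mul_factorial (by omega : l ≤ a + k + l)
        simpa [show a + k + l - l = a + k by omega] using h
      have hl : (Nat.factorial l : ℝ) ≠ 0 := by positivity
      rw [lagC, ← hfac]
      push_cast
      field_simp
    rw [Finset.sum_congr rfl (fun l _ => step l), ← Finset.mul_sum]
    congr 1
    have hV := laguerreV_eq m a k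
    have hcast : ((laguerreV m a k : ℤ) : ℝ)
        = ∑ l ∈ Finset.range (m + 1),
          (-1 : ℝ) ^ l * ((m + a).choose (m - l) : ℝ) * (((a + k + l).choose l) : ℝ) := by
      rw [laguerreV]
      push_cast
      rfl
    rw [← hcast, hV]
    push_cast
    ring
  calc ∑ k ∈ Finset.range (m + 1), ∑ l ∈ Finset.range (m + 1),
        lagC m a k * lagC m a l * (Nat.factorial (a + k + l) : ℝ)
      = ∑ k ∈ Finset.range (m + 1),
          lagC m a k * ((Nat.factorial (a + k) : ℝ) * ((-1 : ℝ) ^ m * (k.choose m : ℝ))) := by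
        refine Finset.sum_congr rfl fun k _ => ?_
        rw [← inner k, Finset.mul_sum]
        exact Finset.sum_congr rfl fun l _ => by ring
    _ = (Nat.factorial (m + a) : ℝ) / (Nat.factorial m : ℝ) := by
        rw [Finset.sum_eq_single_of_mem m (Finset.self_mem_range_succ m)
          (fun k hk hkm => ?_)]
        · rw [lagC]
          simp only [Nat.sub_self, Nat.choose_zero_right, Nat.choose_self]
          have h : a + m = m + a := by omega
          rw [h]
          push_cast
          have hm : (Nat.factorial m : ℝ) ≠ 0 := by positivity
          have hsq : ((-1 : ℝ) ^ m) * ((-1 : ℝ) ^ m) = 1 := by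
            rw [← pow_add, ← two_mul, pow_mul]; norm_num
          field_simp
          linear_combination hsq
        · rw [Finset.mem_range] at hk
          rw [Nat.choose_eq_zero_of_lt (by omega)]
          push_cast
          ring

/-! ### Integrals over `Ioi 0` -/

lemma integrableOn_pow_exp (j : ℕ) :
    IntegrableOn (fun x : ℝ => x ^ j * Real.exp (-x)) (Set.Ioi 0) := by
  have h := Real.GammaIntegral_convergent (s := (j : ℝ) + 1) (by positivity)
  refine (h.congr_fun ?_ measurableSet_Ioi)
  intro x hx
  rw [Set.mem_Ioi] at hx
  simp only [add_sub_cancel_right]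
  rw [Real.rpow_natCast, mul_comm]

lemma integral_pow_exp (j : ℕ) :
    ∫ x in Set.Ioi (0:ℝ), x ^ j * Real.exp (-x) = (Nat.factorial j : ℝ) := by
  have h := Real.Gamma_eq_integral (s := (j : ℝ) + 1) (by positivity)
  rw [Real.Gamma_nat_eq_factorial] at h
  rw [h]
  refine setIntegral_congr_fun measurableSet_Ioi fun x hx => ?_
  rw [Set.mem_Ioi] at hx
  simp only [add_sub_cancel_right]
  rw [Real.rpow_natCast, mul_comm]

lemma laguerre_fun_expand (m a : ℕ) :
    (fun u : ℝ => u ^ a * Real.exp (-u) * (genLaguerreR m (a : ℝ) u) ^ 2)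
      = fun u : ℝ => ∑ p ∈ (Finset.range (m+1)) ×ˢ (Finset.range (m+1)),
          lagC m a p.1 * lagC m a p.2 * (u ^ (a + p.1 + p.2) * Real.exp (-u)) := by
  funext u
  rw [Finset.sum_product (f := fun p =>
      lagC m a p.1 * lagC m a p.2 * (u ^ (a + p.1 + p.2) * Real.exp (-u)))]
  rw [genLaguerreR_nat, sq, Finset.sum_mul_sum]
  simp only [Finset.mul_sum, Finset.sum_mul]
  refine Finset.sum_congr rfl fun k _ => Finset.sum_congr rfl fun l _ => ?_
  rw [lagC, lagC, pow_add, pow_add]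
  ring

lemma integrableOn_laguerre (m a : ℕ) :
    IntegrableOn (fun u : ℝ => u ^ a * Real.exp (-u) * (genLaguerreR m (a : ℝ) u) ^ 2)
      (Set.Ioi 0) := by
  rw [laguerre_fun_expand]
  exact integrable_finset_sum _ fun p _ => ((integrableOn_pow_exp (a + p.1 + p.2)).const_mul _)

lemma integral_Ioi_laguerre (m a : ℕ) :
    ∫ u in Set.Ioi (0:ℝ), u ^ a * Real.exp (-u) * (genLaguerreR m (a : ℝ) u) ^ 2
      = (Nat.factorial (m + a) : ℝ) / (Nat.factorial m : ℝ) := by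
  rw [laguerre_fun_expand]
  rw [integral_finset_sum _ fun p _ => ((integrableOn_pow_exp (a + p.1 + p.2)).const_mul _)]
  have heach : ∀ p : ℕ × ℕ,
      (∫ u in Set.Ioi (0:ℝ), lagC m a p.1 * lagC m a p.2 * (u ^ (a + p.1 + p.2) * Real.exp (-u)))
      = lagC m a p.1 * lagC m a p.2 * (Nat.factorial (a + p.1 + p.2) : ℝ) := fun p => by
    rw [MeasureTheory.integral_const_mul, integral_pow_exp]
  rw [Finset.sum_congr rfl fun p _ => heach p,
    Finset.sum_product (f := fun p : ℕ × ℕ =>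
      lagC m a p.1 * lagC m a p.2 * (Nat.factorial (a + p.1 + p.2) : ℝ)),
    sum_cc]

/-! ### `eigP` for `n = m + a` -/

lemma eigP_eq (R : ℝ) (m a : ℕ) :
    eigP R m (m + a) = ((Nat.factorial m : ℝ) / (Nat.factorial (m + a) : ℝ)) *
      ∫ u in Set.Ioc (0:ℝ) (R ^ 2),
        u ^ a * Real.exp (-u) * (genLaguerreR m (a : ℝ) u) ^ 2 := by
  rw [eigP]
  congr 1
  have hfun : ∀ u : ℝ, u ^ (((m + a : ℕ) : ℤ) - (m : ℤ)) * Real.exp (-u) *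
      |genLaguerreR m (((m + a : ℕ) : ℝ) - (m : ℝ)) u| ^ 2
      = u ^ a * Real.exp (-u) * (genLaguerreR m (a : ℝ) u) ^ 2 := by
    intro u
    have h1 : ((m + a : ℕ) : ℤ) - (m : ℤ) = (a : ℤ) := by push_cast; ring
    have h2 : ((m + a : ℕ) : ℝ) - (m : ℝ) = (a : ℝ) := by push_cast; ring
    rw [h1, h2, zpow_natCast, sq_abs]
  simp only [hfun]
  rw [intervalIntegral.integral_of_le (by positivity)]

lemma eigP_le_one_of_le (R : ℝ) (m n : ℕ) (h : m ≤ n) : eigP R m n ≤ 1 := by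
  obtain ⟨a, rfl⟩ : ∃ a, n = m + a := ⟨n - m, by omega⟩
  rw [eigP_eq]
  have hle : (∫ u in Set.Ioc (0:ℝ) (R ^ 2),
        u ^ a * Real.exp (-u) * (genLaguerreR m (a : ℝ) u) ^ 2)
      ≤ ∫ u in Set.Ioi (0:ℝ), u ^ a * Real.exp (-u) * (genLaguerreR m (a : ℝ) u) ^ 2 := by
    refine setIntegral_mono_set (integrableOn_laguerre m a) ?_ ?_
    · refine (ae_restrict_iff' measurableSet_Ioi).2 (Filter.Eventually.of_forall fun u hu => ?_)
      exact mul_nonneg (mul_nonneg (pow_nonneg (le_of_lt hu) a) (Real.exp_pos _).le)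
        (sq_nonneg _)
    · exact HasSubset.Subset.eventuallyLE Set.Ioc_subset_Ioi_self
  rw [integral_Ioi_laguerre] at hle
  calc ((Nat.factorial m : ℝ) / (Nat.factorial (m + a) : ℝ)) *
        ∫ u in Set.Ioc (0:ℝ) (R ^ 2), u ^ a * Real.exp (-u) * (genLaguerreR m (a : ℝ) u) ^ 2
      ≤ ((Nat.factorial m : ℝ) / (Nat.factorial (m + a) : ℝ)) *
        ((Nat.factorial (m + a) : ℝ) / (Nat.factorial m : ℝ)) :=
        mul_le_mul_of_nonneg_left hle (by positivity)
    _ = 1 := by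
        have h1 : (Nat.factorial m : ℝ) ≠ 0 := by positivity
        have h2 : (Nat.factorial (m + a) : ℝ) ≠ 0 := by positivity
        field_simp

/-! ### Symmetry: reduction of `n < m` to `n > m` -/

lemma genLaguerreR_neg (n s : ℕ) (hs : 1 ≤ s) (u : ℝ) :
    genLaguerreR (n + s) (-(s : ℝ)) u
      = (-1 : ℝ) ^ s * ((Nat.factorial n : ℝ) / (Nat.factorial (n + s) : ℝ)) * u ^ s *
        genLaguerreR n (s : ℝ) u := by
  unfold genLaguerreR
  rw [show n + s + 1 = s + (n + 1) by ring, Finset.sum_range_add]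
  have hzero : ∀ k ∈ Finset.range s,
      (-1 : ℝ) ^ k * ((∏ j ∈ Finset.Icc (k + 1) (n + s), (-(s : ℝ) + (j : ℝ))) /
        (Nat.factorial (n + s - k))) * u ^ k / (Nat.factorial k) = 0 := by
    intro k hk
    rw [Finset.mem_range] at hk
    have hmem : s ∈ Finset.Icc (k + 1) (n + s) := Finset.mem_Icc.2 ⟨by omega, by omega⟩
    rw [Finset.prod_eq_zero hmem (by ring)]
    simp
  rw [Finset.sum_eq_zero hzero, zero_add, Finset.mul_sum]
  refine Finset.sum_congr rfl fun t ht => ?_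
  rw [Finset.mem_range] at ht
  have ht' : t ≤ n := by omega
  have hmap : Finset.Icc (s + t + 1) (s + n) = (Finset.Icc (t + 1) n).map
      (addLeftEmbedding s) := by
    rw [Finset.map_add_left_Icc, show s + (t + 1) = s + t + 1 from by omega]
  have hprod1 : ∏ j ∈ Finset.Icc (s + t + 1) (n + s), (-(s : ℝ) + (j : ℝ))
      = (Nat.factorial n : ℝ) / (Nat.factorial t : ℝ) := by
    rw [show n + s = s + n by ring, hmap, Finset.prod_map]
    have hterm : ∀ i ∈ Finset.Icc (t + 1) n,
        (-(s : ℝ) + ((addLeftEmbedding s i : ℕ) : ℝ)) = ((0 : ℕ) : ℝ) + (i : ℝ) := by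
      intro i _
      have h : (addLeftEmbedding s) i = s + i := rfl
      rw [h]
      push_cast
      ring
    rw [Finset.prod_congr rfl hterm, prod_Icc_factorial 0 t n ht']
    norm_num
  have hprod2 : ∏ j ∈ Finset.Icc (t + 1) n, ((s : ℝ) + (j : ℝ))
      = (Nat.factorial (s + n) : ℝ) / (Nat.factorial (s + t) : ℝ) :=
    prod_Icc_factorial s t n ht'
  rw [hprod1, hprod2]
  have h1 : n + s - (s + t) = n - t := by omega
  rw [h1]
  have e1 : (Nat.factorial t : ℝ) ≠ 0 := by positivity
  have e2 : (Nat.factorial (n - t) : ℝ) ≠ 0 := by positivity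
  have e3 : (Nat.factorial (s + t) : ℝ) ≠ 0 := by positivity
  have e4 : (Nat.factorial (n + s) : ℝ) ≠ 0 := by positivity
  have e5 : (s + n) = (n + s) := by omega
  rw [e5, pow_add, pow_add]
  field_simp

lemma eigP_symm (R : ℝ) (n s : ℕ) (hs : 1 ≤ s) :
    eigP R (n + s) n = eigP R n (n + s) := by
  rw [eigP, eigP]
  have hq : (0 : ℝ) ≤ (Nat.factorial n : ℝ) / (Nat.factorial (n + s) : ℝ) := by positivity
  set q : ℝ := (Nat.factorial n : ℝ) / (Nat.factorial (n + s) : ℝ) with hqdef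
  have key : Set.EqOn
      (fun u : ℝ => u ^ ((n : ℤ) - ((n + s : ℕ) : ℤ)) * Real.exp (-u) *
        |genLaguerreR (n + s) ((n : ℝ) - ((n + s : ℕ) : ℝ)) u| ^ 2)
      (fun u : ℝ => q ^ 2 * (u ^ (((n + s : ℕ) : ℤ) - (n : ℤ)) * Real.exp (-u) *
        |genLaguerreR n (((n + s : ℕ) : ℝ) - (n : ℝ)) u| ^ 2))
      (Set.uIcc (0 : ℝ) (R ^ 2)) := by
    intro u hu
    rw [Set.uIcc_of_le (by positivity)] at hu
    have hu0 : 0 ≤ u := hu.1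
    have hcast1 : (n : ℝ) - ((n + s : ℕ) : ℝ) = -(s : ℝ) := by push_cast; ring
    have hcast2 : ((n + s : ℕ) : ℝ) - (n : ℝ) = (s : ℝ) := by push_cast; ring
    have hz1 : (n : ℤ) - ((n + s : ℕ) : ℤ) = -(s : ℤ) := by push_cast; ring
    have hz2 : ((n + s : ℕ) : ℤ) - (n : ℤ) = (s : ℤ) := by push_cast; ring
    simp only [hcast1, hcast2, hz1, hz2]
    rw [genLaguerreR_neg n s hs u]
    rw [abs_mul, abs_mul, abs_mul]
    rw [abs_pow, abs_neg, abs_one, one_pow, one_mul, abs_of_nonneg hq,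
      abs_of_nonneg (pow_nonneg hu0 s)]
    rcases eq_or_lt_of_le hu0 with h0 | h0
    · rw [← h0]
      rw [zero_zpow _ (by omega : -(s : ℤ) ≠ 0), zero_zpow _ (by omega : (s : ℤ) ≠ 0)]
      ring
    · have hne : u ≠ 0 := ne_of_gt h0
      have hinv : (u : ℝ) ^ (-(s : ℤ)) * u ^ s = 1 := by
        rw [zpow_neg, zpow_natCast]
        exact inv_mul_cancel₀ (pow_ne_zero _ hne)
      have expand : u ^ (-(s : ℤ)) * Real.exp (-u) * (q * u ^ s * |genLaguerreR n (s : ℝ) u|) ^ 2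
          = q ^ 2 * ((u ^ (-(s : ℤ)) * u ^ s) * (u ^ s * Real.exp (-u) *
            |genLaguerreR n (s : ℝ) u| ^ 2)) := by ring
      rw [expand, hinv, one_mul, ← zpow_natCast u s]
  rw [intervalIntegral.integral_congr key, intervalIntegral.integral_const_mul]
  have hfs : (Nat.factorial (n + s) : ℝ) ≠ 0 := by positivity
  have hfn : (Nat.factorial n : ℝ) ≠ 0 := by positivity
  rw [hqdef]
  field_simp

/-! ### Nonnegativity -/

lemma eigP_nonneg (R : ℝ) (m n : ℕ) : 0 ≤ eigP R m n := by
  rw [eigP]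
  refine mul_nonneg (by positivity) ?_
  refine intervalIntegral.integral_nonneg (by positivity) fun u hu => ?_
  exact mul_nonneg (mul_nonneg (zpow_nonneg hu.1 _) (Real.exp_pos _).le) (sq_nonneg _)


/-! ### Summability -/

lemma choose_le_two_pow_real (N j : ℕ) : (N.choose j : ℝ) ≤ 2 ^ N := by
  have h : N.choose j ≤ 2 ^ N := by
    rcases le_or_gt j N with h | h
    · calc N.choose j ≤ ∑ i ∈ Finset.range (N + 1), N.choose i :=
          Finset.single_le_sum (fun i _ => Nat.zero_le _) (Finset.mem_range.2 (by omega))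
        _ = 2 ^ N := Nat.sum_range_choose N
    · simp [Nat.choose_eq_zero_of_lt h]
  exact_mod_cast h

lemma eigP_summable (R : ℝ) (hR : 0 < R) (m : ℕ) : Summable (fun n => eigP R m n) := by
  rw [← summable_nat_add_iff m]
  set Q : ℝ := max 1 (R ^ 2) with hQdef
  have hQ1 : (1 : ℝ) ≤ Q := le_max_left _ _
  have hQ0 : (0 : ℝ) < Q := by linarith
  have hRQ : R ^ 2 ≤ Q := le_max_right _ _
  set K : ℝ := ((m : ℝ) + 1) ^ 2 * 4 ^ m * Q ^ (2 * m) * R ^ 2 with hKdef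
  have hbound : ∀ a : ℕ, eigP R m (a + m) ≤ K * (4 * Q) ^ a / a.factorial := by
    intro a
    rw [add_comm a m, eigP_eq]
    set M : ℝ := ((m : ℝ) + 1) * 2 ^ (m + a) * Q ^ m with hMdef
    have hM0 : 0 ≤ M := by positivity
    set C : ℝ := Q ^ a * M ^ 2 with hCdef
    have hgb : ∀ u ∈ Set.Ioc (0 : ℝ) (R ^ 2),
        u ^ a * Real.exp (-u) * (genLaguerreR m (a : ℝ) u) ^ 2 ≤ C := by
      intro u hu
      have hu0 : 0 ≤ u := hu.1.le
      have huQ : u ≤ Q := hu.2.trans hRQ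
      have h1 : u ^ a ≤ Q ^ a := pow_le_pow_left₀ hu0 huQ a
      have h2 : Real.exp (-u) ≤ 1 := Real.exp_le_one_iff.2 (by linarith [hu.1])
      have hL : |genLaguerreR m (a : ℝ) u| ≤ M := by
        rw [genLaguerreR_nat]
        refine (Finset.abs_sum_le_sum_abs _ _).trans ?_
        have hterm : ∀ k ∈ Finset.range (m + 1),
            |(-1 : ℝ) ^ k * ((m + a).choose (m - k) : ℝ) / (Nat.factorial k) * u ^ k|
              ≤ 2 ^ (m + a) * Q ^ m := by
          intro k hk
          rw [Finset.mem_range] at hk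
          have hub : |(-1 : ℝ) ^ k * ((m + a).choose (m - k) : ℝ) / (Nat.factorial k) * u ^ k|
              = ((m + a).choose (m - k) : ℝ) / (Nat.factorial k) * u ^ k := by
            rw [abs_mul, abs_div, abs_mul, abs_pow, abs_neg, abs_one, one_pow, one_mul,
              abs_of_nonneg (by positivity : (0:ℝ) ≤ ((m + a).choose (m - k) : ℝ)),
              abs_of_nonneg (by positivity : (0:ℝ) ≤ (Nat.factorial k : ℝ)),
              abs_of_nonneg (pow_nonneg hu0 k)]
          rw [hub]
          have hc : ((m + a).choose (m - k) : ℝ) / (Nat.factorial k : ℝ) ≤ 2 ^ (m + a) := by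
            have h1' : ((m + a).choose (m - k) : ℝ) / (Nat.factorial k : ℝ)
                ≤ ((m + a).choose (m - k) : ℝ) := by
              rw [div_le_iff₀ (by positivity)]
              have h2' : (1 : ℝ) ≤ (Nat.factorial k : ℝ) := by
                exact_mod_cast (Nat.factorial_pos k)
              have h3' : (0 : ℝ) ≤ ((m + a).choose (m - k) : ℝ) := Nat.cast_nonneg _
              nlinarith
            exact h1'.trans (choose_le_two_pow_real (m + a) (m - k))
          have hup : u ^ k ≤ Q ^ m :=
            (pow_le_pow_left₀ hu0 huQ k).trans (pow_le_pow_right₀ hQ1 (by omega))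
          exact mul_le_mul hc hup (pow_nonneg hu0 k) (by positivity)
        refine (Finset.sum_le_sum hterm).trans ?_
        rw [Finset.sum_const, Finset.card_range, nsmul_eq_mul, hMdef]
        push_cast
        ring_nf
        exact le_refl _
      have hL2 : (genLaguerreR m (a : ℝ) u) ^ 2 ≤ M ^ 2 := by
        rw [← sq_abs]
        exact pow_le_pow_left₀ (abs_nonneg _) hL 2
      calc u ^ a * Real.exp (-u) * (genLaguerreR m (a : ℝ) u) ^ 2
          ≤ Q ^ a * 1 * M ^ 2 := by
            refine mul_le_mul (mul_le_mul h1 h2 (Real.exp_pos _).le (by positivity)) hL2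
              (sq_nonneg _) (by positivity)
        _ = C := by rw [hCdef]; ring
    have hIle : (∫ u in Set.Ioc (0:ℝ) (R ^ 2),
        u ^ a * Real.exp (-u) * (genLaguerreR m (a : ℝ) u) ^ 2) ≤ C * R ^ 2 := by
      have h1 : (∫ u in Set.Ioc (0:ℝ) (R ^ 2),
          u ^ a * Real.exp (-u) * (genLaguerreR m (a : ℝ) u) ^ 2)
          ≤ ∫ _u in Set.Ioc (0:ℝ) (R ^ 2), C := by
        refine setIntegral_mono_on
          ((integrableOn_laguerre m a).mono_set Set.Ioc_subset_Ioi_self)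
          (integrableOn_const measure_Ioc_lt_top.ne) measurableSet_Ioc hgb
      refine h1.trans ?_
      rw [setIntegral_const, Real.volume_real_Ioc_of_le (by positivity), smul_eq_mul]
      ring_nf
      exact le_refl _
    have hI0 : 0 ≤ (∫ u in Set.Ioc (0:ℝ) (R ^ 2),
        u ^ a * Real.exp (-u) * (genLaguerreR m (a : ℝ) u) ^ 2) := by
      refine setIntegral_nonneg measurableSet_Ioc fun u hu => ?_
      exact mul_nonneg (mul_nonneg (pow_nonneg hu.1.le a) (Real.exp_pos _).le) (sq_nonneg _)
    have hfrac : (Nat.factorial m : ℝ) / (Nat.factorial (m + a) : ℝ)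
        ≤ 1 / (Nat.factorial a : ℝ) := by
      rw [div_le_div_iff₀ (by positivity) (by positivity)]
      have hd : Nat.factorial m * Nat.factorial a ≤ Nat.factorial (m + a) :=
        Nat.le_of_dvd (Nat.factorial_pos _) (Nat.factorial_mul_factorial_dvd_factorial_add m a)
      calc (Nat.factorial m : ℝ) * (Nat.factorial a : ℝ)
          = ((Nat.factorial m * Nat.factorial a : ℕ) : ℝ) := by push_cast; ring
        _ ≤ (Nat.factorial (m + a) : ℝ) := by exact_mod_cast hd
        _ = 1 * (Nat.factorial (m + a) : ℝ) := by ring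
    have hCR : C * R ^ 2 = K * (4 * Q) ^ a := by
      rw [hCdef, hMdef, hKdef]
      have h2 : ((2:ℝ) ^ (m + a)) ^ 2 = 4 ^ m * 4 ^ a := by
        rw [← pow_mul]
        have he : (m + a) * 2 = 2 * m + 2 * a := by ring
        rw [he, pow_add, pow_mul, pow_mul]
        norm_num
      rw [mul_pow, mul_pow, h2, mul_pow, pow_mul]
      ring
    calc (Nat.factorial m : ℝ) / (Nat.factorial (m + a) : ℝ) *
          ∫ u in Set.Ioc (0:ℝ) (R ^ 2), u ^ a * Real.exp (-u) * (genLaguerreR m (a : ℝ) u) ^ 2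
        ≤ (1 / (Nat.factorial a : ℝ)) *
          ∫ u in Set.Ioc (0:ℝ) (R ^ 2), u ^ a * Real.exp (-u) * (genLaguerreR m (a : ℝ) u) ^ 2 :=
          mul_le_mul_of_nonneg_right hfrac hI0
      _ ≤ (1 / (Nat.factorial a : ℝ)) * (C * R ^ 2) :=
          mul_le_mul_of_nonneg_left hIle (by positivity)
      _ = K * (4 * Q) ^ a / a.factorial := by rw [hCR]; ring
  refine Summable.of_nonneg_of_le (fun a => eigP_nonneg R m (a + m)) hbound ?_
  have h := (Real.summable_pow_div_factorial (4 * Q)).mul_left K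
  simpa [mul_div_assoc] using h

end LaguerreAux

theorem eigP_bounds_and_summable (R : ℝ) (hR : 0 < R) (m : ℕ) :
    (∀ n, 0 ≤ eigP R m n) ∧ (∀ n, eigP R m n ≤ 1) ∧ Summable (fun n => eigP R m n) := by
  refine ⟨fun n => LaguerreAux.eigP_nonneg R m n, fun n => ?_, LaguerreAux.eigP_summable R hR m⟩
  rcases le_or_gt m n with h | h
  · exact LaguerreAux.eigP_le_one_of_le R m n h
  · have hs : 1 ≤ m - n := by omega
    have hmn : m = n + (m - n) := by omega
    rw [hmn, LaguerreAux.eigP_symm R n (m - n) hs]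
    exact LaguerreAux.eigP_le_one_of_le R n (n + (m - n)) (by omega)
end
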